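/- If a chord diagram contains a bigon (coherent or incoherent) or a trigon (of any of the types A, B, C, D), then its reductivity is at most 4. (Combinatorial form of the paper's Theorem 1.1: combined with the Adams–Shinjo–Tanaka lemma that every reduced spherical curve has a bigon or trigon, it gives that every spherical curve has reductivity at most four.) -/
import Mathlib


/-!
Chord diagrams modeling spherical curves (Gauss diagrams).

A chord diagram with `n` chords is a fixed-point-free involution `f` on the
cyclically ordered set `ZMod (2*n)`; the unordered pairs `{a, f a}` are its chords.
-/

namespace SphericalCurveReductivity

/-- `x` lies in the open arc from `a` to `b` (in the positive cyclic direction). -/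
def InArc {N : ℕ} (a b x : ZMod N) : Prop :=
  0 < (x - a).val ∧ (x - a).val < (b - a).val

/-- The chord `{a, f a}` crosses the chord `{c, f c}`: the four endpoints are pairwise
distinct and exactly one of `c`, `f c` lies in the open arc from `a` to `f a`. -/
def Crosses {N : ℕ} (f : ZMod N → ZMod N) (a c : ZMod N) : Prop :=
  c ≠ a ∧ c ≠ f a ∧ f c ≠ a ∧ f c ≠ f a ∧
    Xor' (InArc a (f a) c) (InArc a (f a) (f c))

/-- A chord diagram is reducible if some chord crosses no other chord. -/
def Reducible {N : ℕ} (f : ZMod N → ZMod N) : Prop :=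
  ∃ a, ∀ c, ¬ Crosses f a c

/-- The embedding of the points of the new chord diagram (after the I-move at the
chord `{a, b}`) into the old one: the points `a`, `b` are deleted and the points of
the open arc from `a` to `b` appear in reversed order, followed by the points of the
open arc from `b` to `a` in their original order. -/
def imoveEmb (n : ℕ) (a b : ZMod (2 * n)) (k : ZMod (2 * (n - 1))) : ZMod (2 * n) :=
  if k.val + 1 < (b - a).val then a + (((b - a).val - 1 - k.val : ℕ) : ZMod (2 * n))
  else a + ((k.val + 2 : ℕ) : ZMod (2 * n))

/-- The induced map of points of the old chord diagram (other than `a`, `b`) to points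
of the new chord diagram after the I-move at the chord `{a, b}`; inverse to `imoveEmb`. -/
def imoveProj (n : ℕ) (a b : ZMod (2 * n)) (x : ZMod (2 * n)) : ZMod (2 * (n - 1)) :=
  if (x - a).val < (b - a).val then (((b - a).val - 1 - (x - a).val : ℕ) : ZMod (2 * (n - 1)))
  else (((x - a).val - 2 : ℕ) : ZMod (2 * (n - 1)))

/-- The I-move (inverse-half-twisted splice) at the chord `{a, f a}`: delete the two
points `a`, `f a` and reverse the order of the points along the open arc from `a`
to `f a`, producing a chord diagram with `n - 1` chords. -/
def IMove {n : ℕ} (f : ZMod (2 * n) → ZMod (2 * n)) (a : ZMod (2 * n))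
    (k : ZMod (2 * (n - 1))) : ZMod (2 * (n - 1)) :=
  imoveProj n a (f a) (f (imoveEmb n a (f a) k))

/-- `ReductivityLe m f` : the reductivity of the chord diagram `f` is at most `m`,
i.e. at most `m` successive I-moves transform `f` into a reducible chord diagram. -/
def ReductivityLe : ℕ → ∀ {n : ℕ}, (ZMod (2 * n) → ZMod (2 * n)) → Prop
  | 0, _, f => Reducible f
  | m + 1, n, f => Reducible f ∨ ∃ a : ZMod (2 * n), ReductivityLe m (IMove f a)

/-- An incoherent bigon: the two chords `{i, j}` and `{i+1, j+1}` with the four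
endpoints pairwise distinct. -/
def IncoherentBigon {N : ℕ} (f : ZMod N → ZMod N) (i j : ZMod N) : Prop :=
  f i = j ∧ f (i + 1) = j + 1 ∧ ({i, j, i + 1, j + 1} : Finset (ZMod N)).card = 4

/-- A coherent bigon: the two chords `{i, j+1}` and `{i+1, j}` with the four
endpoints pairwise distinct. -/
def CoherentBigon {N : ℕ} (f : ZMod N → ZMod N) (i j : ZMod N) : Prop :=
  f i = j + 1 ∧ f (i + 1) = j ∧ ({i, j, i + 1, j + 1} : Finset (ZMod N)).card = 4

/-- The six endpoints of a trigon with corners at the consecutive pairs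
`(i, i+1)`, `(j, j+1)`, `(k, k+1)`. -/
def trigonSet {N : ℕ} (i j k : ZMod N) : Finset (ZMod N) :=
  {i, i + 1, j, j + 1, k, k + 1}

/-- A trigon: three chords whose six endpoints form the three pairs of cyclically
consecutive points `(i, i+1)`, `(j, j+1)`, `(k, k+1)` (pairwise distinct), such that no
chord joins the two points of one of these pairs, so that the three chords connect the
three consecutive pairs in a triangle. -/
def Trigon {N : ℕ} (f : ZMod N → ZMod N) (i j k : ZMod N) : Prop :=
  (trigonSet i j k).card = 6 ∧
  (∀ x ∈ trigonSet i j k, f x ∈ trigonSet i j k) ∧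
  f i ≠ i + 1 ∧ f j ≠ j + 1 ∧ f k ≠ k + 1

/-- A representative point of the third chord of a trigon (the chord not containing
`i` nor `i + 1`). -/
def trigonThird {N : ℕ} (f : ZMod N → ZMod N) (i j : ZMod N) : ZMod N :=
  if j = f i ∨ j = f (i + 1) then j + 1 else j

/-- Exactly two of three propositions hold. -/
def ExactlyTwo (p q r : Prop) : Prop :=
  (p ∧ q ∧ ¬r) ∨ (p ∧ ¬q ∧ r) ∨ (¬p ∧ q ∧ r)

/-- Exactly one of three propositions holds. -/
def ExactlyOne (p q r : Prop) : Prop :=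
  (p ∧ ¬q ∧ ¬r) ∨ (¬p ∧ q ∧ ¬r) ∨ (¬p ∧ ¬q ∧ r)

/-- Trigon of type A: exactly two of the three pairs of its chords cross. -/
def TrigonA {N : ℕ} (f : ZMod N → ZMod N) (i j k : ZMod N) : Prop :=
  Trigon f i j k ∧
    ExactlyTwo (Crosses f i (i + 1)) (Crosses f i (trigonThird f i j))
      (Crosses f (i + 1) (trigonThird f i j))

/-- Trigon of type B: exactly one pair of its chords crosses. -/
def TrigonB {N : ℕ} (f : ZMod N → ZMod N) (i j k : ZMod N) : Prop :=
  Trigon f i j k ∧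
    ExactlyOne (Crosses f i (i + 1)) (Crosses f i (trigonThird f i j))
      (Crosses f (i + 1) (trigonThird f i j))

/-- Trigon of type C: its three chords pairwise cross. -/
def TrigonC {N : ℕ} (f : ZMod N → ZMod N) (i j k : ZMod N) : Prop :=
  Trigon f i j k ∧
    Crosses f i (i + 1) ∧ Crosses f i (trigonThird f i j) ∧
      Crosses f (i + 1) (trigonThird f i j)

/-- Trigon of type D: no two of its chords cross. -/
def TrigonD {N : ℕ} (f : ZMod N → ZMod N) (i j k : ZMod N) : Prop :=
  Trigon f i j k ∧
    ¬ Crosses f i (i + 1) ∧ ¬ Crosses f i (trigonThird f i j) ∧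
      ¬ Crosses f (i + 1) (trigonThird f i j)

/-! ### Toolkit: `ZMod.val` arithmetic -/

section Toolkit

variable {N : ℕ}

lemma zmod_eq_iff_val [NeZero N] {x y : ZMod N} : x = y ↔ x.val = y.val :=
  ⟨fun h => h ▸ rfl, fun h => ZMod.val_injective N h⟩

lemma dval_eq_iff [NeZero N] {a x y : ZMod N} : x = y ↔ (x - a).val = (y - a).val := by
  constructor
  · rintro rfl; rfl
  · intro h
    have h2 : x - a = y - a := ZMod.val_injective N h
    exact sub_left_inj.mp h2

lemma dval_eq_zero_iff [NeZero N] {a x : ZMod N} : (x - a).val = 0 ↔ x = a := by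
  rw [ZMod.val_eq_zero, sub_eq_zero]

lemma dval_triangle [NeZero N] (a b c : ZMod N) :
    (c - a).val = ((c - b).val + (b - a).val) % N := by
  have h : c - a = (c - b) + (b - a) := by ring
  rw [h, ZMod.val_add]

lemma dval_add_one [NeZero N] (hN : N ≠ 1) {a x : ZMod N} (h : (x - a).val + 1 < N) :
    (x + 1 - a).val = (x - a).val + 1 := by
  have h1 : x + 1 - a = (x - a) + 1 := by ring
  rw [h1, ZMod.val_add, ZMod.val_one'' hN, Nat.mod_eq_of_lt h]

lemma add_one_eq_of_dval_top [NeZero N] {a x : ZMod N} (h : (x - a).val = N - 1) :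
    x + 1 = a := by
  have h1 : x - a = ((N - 1 : ℕ) : ZMod N) := by
    rw [← h, ZMod.natCast_zmod_val]
  have h2 : x + 1 - a = ((N - 1 : ℕ) : ZMod N) + 1 := by rw [← h1]; ring
  have hN : 0 < N := Nat.pos_of_ne_zero (NeZero.ne N)
  have h3 : ((N - 1 : ℕ) : ZMod N) + 1 = 0 := by
    have : (((N - 1) + 1 : ℕ) : ZMod N) = ((N : ℕ) : ZMod N) := by
      congr 1; omega
    push_cast at this
    rw [this, ZMod.natCast_self]
  have : x + 1 - a = 0 := by rw [h2, h3]
  rwa [sub_eq_zero] at this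

lemma dval_add_nat [NeZero N] {a x : ZMod N} {m : ℕ} (h : (x - a).val + m < N) :
    (x + (m : ZMod N) - a).val = (x - a).val + m := by
  have h1 : x + (m : ZMod N) - a = (x - a) + (m : ZMod N) := by ring
  have hm : ((m : ZMod N)).val = m := ZMod.val_cast_of_lt (by omega)
  rw [h1, ZMod.val_add, hm, Nat.mod_eq_of_lt h]

end Toolkit

/-! ### Engine: basic properties of the I-move -/

section Engine

variable {n : ℕ}

/-- Unfold `InArc` to val inequalities. -/
lemma inArc_iff {N : ℕ} {a b x : ZMod N} :
    InArc a b x ↔ 0 < (x - a).val ∧ (x - a).val < (b - a).val := Iff.rfl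

lemma proj_val_lo (hn : 2 ≤ n) {a b x : ZMod (2 * n)}
    (h1 : 0 < (x - a).val) (h2 : (x - a).val < (b - a).val) :
    (imoveProj n a b x).val = (b - a).val - 1 - (x - a).val := by
  haveI : NeZero (2 * n) := ⟨by omega⟩
  haveI : NeZero (2 * (n - 1)) := ⟨by omega⟩
  have hb : (b - a).val < 2 * n := ZMod.val_lt _
  unfold imoveProj
  rw [if_pos h2, ZMod.val_cast_of_lt (by omega)]

lemma proj_val_hi (hn : 2 ≤ n) {a b x : ZMod (2 * n)}
    (h2 : (b - a).val < (x - a).val) :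
    (imoveProj n a b x).val = (x - a).val - 2 := by
  haveI : NeZero (2 * n) := ⟨by omega⟩
  haveI : NeZero (2 * (n - 1)) := ⟨by omega⟩
  have hb : (x - a).val < 2 * n := ZMod.val_lt _
  unfold imoveProj
  rw [if_neg (by omega), ZMod.val_cast_of_lt (by omega)]

lemma emb_dval (hn : 2 ≤ n) {a b : ZMod (2 * n)} (hab : 0 < (b - a).val)
    (k : ZMod (2 * (n - 1))) :
    (imoveEmb n a b k - a).val =
      if k.val + 1 < (b - a).val then (b - a).val - 1 - k.val else k.val + 2 := by
  haveI : NeZero (2 * n) := ⟨by omega⟩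
  haveI : NeZero (2 * (n - 1)) := ⟨by omega⟩
  have hb : (b - a).val < 2 * n := ZMod.val_lt _
  have hk : k.val < 2 * (n - 1) := ZMod.val_lt _
  unfold imoveEmb
  split_ifs with h
  · rw [add_sub_cancel_left, ZMod.val_cast_of_lt (by omega)]
  · rw [add_sub_cancel_left, ZMod.val_cast_of_lt (by omega)]

lemma emb_ne_a (hn : 2 ≤ n) {a b : ZMod (2 * n)} (hab : 0 < (b - a).val)
    (k : ZMod (2 * (n - 1))) : imoveEmb n a b k ≠ a := by
  haveI : NeZero (2 * n) := ⟨by omega⟩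
  haveI : NeZero (2 * (n - 1)) := ⟨by omega⟩
  intro h
  have := emb_dval hn hab k
  rw [h, sub_self, ZMod.val_zero] at this
  have hk : k.val < 2 * (n - 1) := ZMod.val_lt _
  split_ifs at this <;> omega

lemma emb_ne_b (hn : 2 ≤ n) {a b : ZMod (2 * n)} (hab : 0 < (b - a).val)
    (k : ZMod (2 * (n - 1))) : imoveEmb n a b k ≠ b := by
  haveI : NeZero (2 * n) := ⟨by omega⟩
  haveI : NeZero (2 * (n - 1)) := ⟨by omega⟩
  intro h
  have h2 := emb_dval hn hab k
  rw [h] at h2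
  have hk : k.val < 2 * (n - 1) := ZMod.val_lt _
  split_ifs at h2 <;> omega

lemma proj_emb (hn : 2 ≤ n) {a b : ZMod (2 * n)} (hab : 0 < (b - a).val)
    (k : ZMod (2 * (n - 1))) : imoveProj n a b (imoveEmb n a b k) = k := by
  haveI : NeZero (2 * n) := ⟨by omega⟩
  haveI : NeZero (2 * (n - 1)) := ⟨by omega⟩
  have hd := emb_dval hn hab k
  have hk : k.val < 2 * (n - 1) := ZMod.val_lt _
  have hb : (b - a).val < 2 * n := ZMod.val_lt _
  apply (zmod_eq_iff_val).2
  split_ifs at hd with h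
  · rw [proj_val_lo hn (by omega) (by omega), hd]; omega
  · rw [proj_val_hi hn (by omega), hd]; omega

lemma emb_proj (hn : 2 ≤ n) {a b x : ZMod (2 * n)} (hab : 0 < (b - a).val)
    (hxa : x ≠ a) (hxb : x ≠ b) : imoveEmb n a b (imoveProj n a b x) = x := by
  haveI : NeZero (2 * n) := ⟨by omega⟩
  haveI : NeZero (2 * (n - 1)) := ⟨by omega⟩
  have hd0 : 0 < (x - a).val := by
    rcases Nat.eq_zero_or_pos (x - a).val with h | h
    · exact absurd (dval_eq_zero_iff.1 h) hxa
    · exact h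
  have hdb : (x - a).val ≠ (b - a).val := fun h => hxb (dval_eq_iff.2 h)
  have hx : (x - a).val < 2 * n := ZMod.val_lt _
  have hb : (b - a).val < 2 * n := ZMod.val_lt _
  apply (dval_eq_iff (a := a)).2
  rcases lt_or_gt_of_ne hdb with h | h
  · have hp := proj_val_lo hn hd0 h
    rw [emb_dval hn hab, hp, if_pos (by omega)]
    omega
  · have hp := proj_val_hi hn h
    rw [emb_dval hn hab, hp, if_neg (by omega)]
    omega

lemma proj_inj (hn : 2 ≤ n) {a b x y : ZMod (2 * n)} (hab : 0 < (b - a).val)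
    (hxa : x ≠ a) (hxb : x ≠ b) (hya : y ≠ a) (hyb : y ≠ b)
    (h : imoveProj n a b x = imoveProj n a b y) : x = y := by
  have h1 := emb_proj hn hab hxa hxb
  have h2 := emb_proj hn hab hya hyb
  rw [← h1, ← h2, h]

end Engine

/-! ### Engine 2: more properties -/

section Engine2

variable {n : ℕ}

lemma dval_pos {N : ℕ} [NeZero N] {a x : ZMod N} (h : x ≠ a) : 0 < (x - a).val :=
  Nat.pos_of_ne_zero fun h0 => h (dval_eq_zero_iff.1 h0)

lemma val_succ {M : ℕ} [NeZero M] (hM : M ≠ 1) {u : ZMod M} (h : u.val + 1 < M) :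
    (u + 1).val = u.val + 1 := by
  rw [ZMod.val_add, ZMod.val_one'' hM, Nat.mod_eq_of_lt h]

lemma succ_of_val_top {M : ℕ} [NeZero M] {u : ZMod M} (h : u.val = M - 1) : u + 1 = 0 := by
  have h2 := add_one_eq_of_dval_top (a := 0) (x := u) (by rwa [sub_zero])
  exact h2

lemma neg_one_val {M : ℕ} (hM : 2 ≤ M) : (-1 : ZMod M).val = M - 1 := by
  haveI : NeZero M := ⟨by omega⟩
  have h : ((M - 1 : ℕ) : ZMod M) + 1 = 0 := by
    have h2 : (((M - 1) + 1 : ℕ) : ZMod M) = ((M : ℕ) : ZMod M) := by congr 1; omega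
    push_cast at h2
    rw [h2, ZMod.natCast_self]
  rw [neg_eq_of_add_eq_zero_left h, ZMod.val_cast_of_lt (by omega)]

lemma dval_sub_one {M : ℕ} (hM : 2 ≤ M) {a x : ZMod M} (h : 0 < (x - a).val) :
    (x - 1 - a).val = (x - a).val - 1 := by
  haveI : NeZero M := ⟨by omega⟩
  have h1 : x - 1 - a = (x - a) + (-1) := by ring
  have hx : (x - a).val < M := ZMod.val_lt _
  rw [h1, ZMod.val_add, neg_one_val hM]
  have h3 : (x - a).val + (M - 1) = ((x - a).val - 1) + M := by omega
  rw [h3, Nat.add_mod_right, Nat.mod_eq_of_lt (by omega)]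

lemma IMove_proj (hn : 2 ≤ n) {f : ZMod (2 * n) → ZMod (2 * n)} {a x : ZMod (2 * n)}
    (hab : 0 < (f a - a).val) (hxa : x ≠ a) (hxb : x ≠ f a) :
    IMove f a (imoveProj n a (f a) x) = imoveProj n a (f a) (f x) := by
  unfold IMove
  rw [emb_proj hn hab hxa hxb]

lemma f_emb_ne_a (hn : 2 ≤ n) {f : ZMod (2 * n) → ZMod (2 * n)} {a : ZMod (2 * n)}
    (hinv : Function.Involutive f) (hab : 0 < (f a - a).val) (k : ZMod (2 * (n - 1))) :
    f (imoveEmb n a (f a) k) ≠ a := by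
  intro h
  have h2 := congrArg f h
  rw [hinv] at h2
  exact emb_ne_b hn hab k h2

lemma f_emb_ne_b (hn : 2 ≤ n) {f : ZMod (2 * n) → ZMod (2 * n)} {a : ZMod (2 * n)}
    (hinv : Function.Involutive f) (hab : 0 < (f a - a).val) (k : ZMod (2 * (n - 1))) :
    f (imoveEmb n a (f a) k) ≠ f a := by
  intro h
  have h2 := congrArg f h
  rw [hinv, hinv] at h2
  exact emb_ne_a hn hab k h2

lemma IMove_invol (hn : 2 ≤ n) {f : ZMod (2 * n) → ZMod (2 * n)}
    (hinv : Function.Involutive f) {a : ZMod (2 * n)} (hfa : f a ≠ a) :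
    Function.Involutive (IMove f a) := by
  haveI : NeZero (2 * n) := ⟨by omega⟩
  intro k
  have hab : 0 < (f a - a).val := dval_pos hfa
  show IMove f a (imoveProj n a (f a) (f (imoveEmb n a (f a) k))) = k
  rw [IMove_proj hn hab (f_emb_ne_a hn hinv hab k) (f_emb_ne_b hn hinv hab k),
    hinv, proj_emb hn hab]

lemma IMove_free (hn : 2 ≤ n) {f : ZMod (2 * n) → ZMod (2 * n)}
    (hinv : Function.Involutive f) (hfree : ∀ x, f x ≠ x) {a : ZMod (2 * n)}
    (k : ZMod (2 * (n - 1))) : IMove f a k ≠ k := by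
  haveI : NeZero (2 * n) := ⟨by omega⟩
  intro h
  have hab : 0 < (f a - a).val := dval_pos (hfree a)
  have h1 : f (imoveEmb n a (f a) k) = imoveEmb n a (f a) k := by
    apply proj_inj hn hab (f_emb_ne_a hn hinv hab k) (f_emb_ne_b hn hinv hab k)
      (emb_ne_a hn hab k) (emb_ne_b hn hab k)
    calc imoveProj n a (f a) (f (imoveEmb n a (f a) k)) = IMove f a k := rfl
    _ = k := h
    _ = imoveProj n a (f a) (imoveEmb n a (f a) k) := (proj_emb hn hab k).symm
  exact hfree _ h1

lemma proj_succ_rev (hn : 2 ≤ n) {a b x : ZMod (2 * n)} (h1 : 0 < (x - a).val)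
    (h2 : (x - a).val < (b - a).val) (h3 : x + 1 ≠ b) :
    imoveProj n a b x = imoveProj n a b (x + 1) + 1 := by
  haveI : NeZero (2 * n) := ⟨by omega⟩
  haveI : NeZero (2 * (n - 1)) := ⟨by omega⟩
  have hb : (b - a).val < 2 * n := ZMod.val_lt _
  have hd : (x + 1 - a).val = (x - a).val + 1 := dval_add_one (by omega) (by omega)
  have h4 : (x + 1 - a).val ≠ (b - a).val := fun h => h3 (dval_eq_iff.2 h)
  apply zmod_eq_iff_val.2
  rw [proj_val_lo hn h1 h2, val_succ (by omega)
    (by rw [proj_val_lo hn (by omega) (by omega)]; omega),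
    proj_val_lo hn (by omega) (by omega), hd]
  omega

lemma proj_succ_pres (hn : 2 ≤ n) {a b x : ZMod (2 * n)} (hab : 0 < (b - a).val)
    (h2 : (b - a).val < (x - a).val) (h3 : x + 1 ≠ a) :
    imoveProj n a b (x + 1) = imoveProj n a b x + 1 := by
  haveI : NeZero (2 * n) := ⟨by omega⟩
  haveI : NeZero (2 * (n - 1)) := ⟨by omega⟩
  have hb : (x - a).val < 2 * n := ZMod.val_lt _
  have htop : (x - a).val ≠ 2 * n - 1 := fun h => h3 (add_one_eq_of_dval_top (by omega))
  have hd : (x + 1 - a).val = (x - a).val + 1 := dval_add_one (by omega) (by omega)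
  apply zmod_eq_iff_val.2
  rw [proj_val_hi hn (by omega), val_succ (by omega)
    (by rw [proj_val_hi hn h2]; omega), proj_val_hi hn h2, hd]
  omega

lemma proj_junction1 (hn : 2 ≤ n) {a b : ZMod (2 * n)} (hL2 : 2 ≤ (b - a).val)
    (hLt : (b - a).val ≤ 2 * n - 2) :
    imoveProj n a b (b + 1) = imoveProj n a b (a + 1) + 1 := by
  haveI : NeZero (2 * n) := ⟨by omega⟩
  haveI : NeZero (2 * (n - 1)) := ⟨by omega⟩
  have hda : (a + 1 - a).val = 1 := by
    have h : a + 1 - a = 1 := by ring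
    rw [h, ZMod.val_one'' (by omega)]
  have hdb : (b + 1 - a).val = (b - a).val + 1 := dval_add_one (by omega) (by omega)
  apply zmod_eq_iff_val.2
  rw [proj_val_hi hn (by omega), val_succ (by omega)
    (by rw [proj_val_lo hn (by omega) (by omega)]; omega),
    proj_val_lo hn (by omega) (by omega), hda, hdb]
  omega

lemma proj_junction2 (hn : 2 ≤ n) {a b : ZMod (2 * n)} (hL2 : 2 ≤ (b - a).val)
    (hLt : (b - a).val ≤ 2 * n - 2) :
    imoveProj n a b (b - 1) = imoveProj n a b (a - 1) + 1 := by
  haveI : NeZero (2 * n) := ⟨by omega⟩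
  haveI : NeZero (2 * (n - 1)) := ⟨by omega⟩
  have hda : (a - 1 - a).val = 2 * n - 1 := by
    have h : a - 1 - a = -1 := by ring
    rw [h, neg_one_val (by omega)]
  have hdb : (b - 1 - a).val = (b - a).val - 1 := dval_sub_one (by omega) (by omega)
  have hproja : (imoveProj n a b (a - 1)).val = 2 * n - 3 := by
    rw [proj_val_hi hn (by omega), hda]; omega
  apply zmod_eq_iff_val.2
  have hsucc : imoveProj n a b (a - 1) + 1 = 0 := succ_of_val_top (by rw [hproja]; omega)
  rw [hsucc, proj_val_lo hn (by omega) (by omega), hdb, ZMod.val_zero]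
  omega

end Engine2

/-! ### Reducibility helpers -/

section Red

lemma adj_reducible {m : ℕ} (hm : 1 ≤ m) {f : ZMod (2 * m) → ZMod (2 * m)} {a : ZMod (2 * m)}
    (h : f a = a + 1) : Reducible f := by
  refine ⟨a, fun c hc => ?_⟩
  obtain ⟨h1, h2, h3, h4, h5⟩ := hc
  rw [h] at h5
  haveI : NeZero (2 * m) := ⟨by omega⟩
  have hval : (a + 1 - a).val = 1 := by
    have he : a + 1 - a = 1 := by ring
    rw [he, ZMod.val_one'' (by omega)]
  rcases h5 with ⟨⟨p1, p2⟩, -⟩ | ⟨⟨p1, p2⟩, -⟩ <;> rw [hval] at p2 <;> omega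

lemma RL_of_reducible : ∀ (m : ℕ) {k : ℕ} {f : ZMod (2 * k) → ZMod (2 * k)},
    Reducible f → ReductivityLe m f
  | 0, _, _, h => h
  | (_ + 1), _, _, h => Or.inl h

lemma RL_step {m k : ℕ} {f : ZMod (2 * k) → ZMod (2 * k)} (a : ZMod (2 * k))
    (h : ReductivityLe m (IMove f a)) : ReductivityLe (m + 1) f := Or.inr ⟨a, h⟩

lemma RL_succ (m : ℕ) : ∀ {k : ℕ} {f : ZMod (2 * k) → ZMod (2 * k)},
    ReductivityLe m f → ReductivityLe (m + 1) f := by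
  induction m with
  | zero => intro k f h; exact Or.inl h
  | succ m ih =>
    intro k f h
    rcases h with h | ⟨a, h⟩
    · exact Or.inl h
    · exact Or.inr ⟨a, ih h⟩

lemma card_le_three {α : Type*} [DecidableEq α] (a b c : α) :
    ({a, b, c} : Finset α).card ≤ 3 := by
  apply (Finset.card_insert_le _ _).trans
  have h := (Finset.card_insert_le b ({c} : Finset α))
  simp only [Finset.card_singleton] at h ⊢
  omega

lemma of_card4 {α : Type*} [DecidableEq α] {a b c d : α}
    (h : ({a, b, c, d} : Finset α).card = 4) :
    a ≠ b ∧ a ≠ c ∧ a ≠ d ∧ b ≠ c ∧ b ≠ d ∧ c ≠ d := by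
  refine ⟨?_, ?_, ?_, ?_, ?_, ?_⟩ <;> rintro rfl
  · have he : ({a, a, c, d} : Finset α) = {a, c, d} := by ext x; simp
    rw [he] at h; have := card_le_three a c d; omega
  · have he : ({a, b, a, d} : Finset α) = {a, b, d} := by ext x; simp; tauto
    rw [he] at h; have := card_le_three a b d; omega
  · have he : ({a, b, c, a} : Finset α) = {a, b, c} := by ext x; simp; tauto
    rw [he] at h; have := card_le_three a b c; omega
  · have he : ({a, b, b, d} : Finset α) = {a, b, d} := by ext x; simp
    rw [he] at h; have := card_le_three a b d; omega
  · have he : ({a, b, c, b} : Finset α) = {a, b, c} := by ext x; simp; tauto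
    rw [he] at h; have := card_le_three a b c; omega
  · have he : ({a, b, c, c} : Finset α) = {a, b, c} := by ext x; simp
    rw [he] at h; have := card_le_three a b c; omega

lemma card4_of {α : Type*} [DecidableEq α] {a b c d : α}
    (h1 : a ≠ b) (h2 : a ≠ c) (h3 : a ≠ d) (h4 : b ≠ c) (h5 : b ≠ d) (h6 : c ≠ d) :
    ({a, b, c, d} : Finset α).card = 4 := by
  rw [Finset.card_insert_of_notMem (by simp [h1, h2, h3]),
    Finset.card_insert_of_notMem (by simp [h4, h5]),
    Finset.card_insert_of_notMem (by simp [h6]), Finset.card_singleton]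

end Red


/-! ### More toolkit -/

section Toolkit2

variable {N : ℕ}

lemma dval_symm [NeZero N] {a x : ZMod N} (h : x ≠ a) : (a - x).val = N - (x - a).val := by
  have h1 : a - x = -(x - a) := by ring
  rw [h1, ZMod.neg_val, if_neg (fun h0 => h (sub_eq_zero.1 h0))]

lemma dval_triangle' [NeZero N] (a b c : ZMod N) :
    (c - a).val = (c - b).val + (b - a).val ∨
      (c - a).val + N = (c - b).val + (b - a).val := by
  have h := dval_triangle a b c
  have h1 : (c - b).val < N := ZMod.val_lt _
  have h2 : (b - a).val < N := ZMod.val_lt _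
  rcases lt_or_ge ((c - b).val + (b - a).val) N with hlt | hge
  · left; rw [h, Nat.mod_eq_of_lt hlt]
  · right
    rw [h, Nat.mod_eq_sub_mod hge, Nat.mod_eq_of_lt (by omega)]
    omega

lemma ne_of_dval_ne [NeZero N] {a x y : ZMod N} (h : (x - a).val ≠ (y - a).val) : x ≠ y :=
  fun h0 => h (by rw [h0])

lemma dval_ne_of_ne [NeZero N] {a x y : ZMod N} (h : x ≠ y) : (x - a).val ≠ (y - a).val :=
  fun h0 => h (dval_eq_iff.2 h0)

end Toolkit2

/-! ### Bigon lemmas -/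

section Bigon

lemma two_le_of_card4 {m : ℕ} (hm : 1 ≤ m) {s : Finset (ZMod (2 * m))}
    (h : s.card = 4) : 2 ≤ m := by
  haveI : NeZero (2 * m) := ⟨by omega⟩
  have hc := Finset.card_le_univ s
  rw [h, ZMod.card] at hc
  omega

lemma incoh_step {m : ℕ} (hm : 1 ≤ m) {f : ZMod (2 * m) → ZMod (2 * m)} {i j : ZMod (2 * m)}
    (hb : IncoherentBigon f i j) : ∃ a, Reducible (IMove f a) := by
  obtain ⟨h1, h2, hcard⟩ := hb
  have hm2 : 2 ≤ m := two_le_of_card4 hm hcard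
  haveI : NeZero (2 * m) := ⟨by omega⟩
  obtain ⟨d1, d2, d3, d4, d5, d6⟩ := of_card4 hcard
  -- d1 : i ≠ j, d2 : i ≠ i+1, d3 : i ≠ j+1, d4 : j ≠ i+1, d5 : j ≠ j+1, d6 : i+1 ≠ j+1
  have hab : 0 < (f i - i).val := by rw [h1]; exact dval_pos (Ne.symm d1)
  have hone : (i + 1 - i).val = 1 := by
    have he : i + 1 - i = 1 := by ring
    rw [he, ZMod.val_one'' (by omega)]
  have hL1 : (j - i).val ≠ 1 := by
    intro h
    exact (Ne.symm d4) (dval_eq_iff.2 (by rw [hone, h]))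
  have hLtop : (j - i).val ≠ 2 * m - 1 := by
    intro h
    exact (Ne.symm d3) (add_one_eq_of_dval_top h)
  have hLpos : 0 < (j - i).val := dval_pos (Ne.symm d1)
  have hLlt : (j - i).val < 2 * m := ZMod.val_lt _
  refine ⟨i, adj_reducible (m := m - 1) (by omega) (a := imoveProj m i (f i) (i + 1)) ?_⟩
  have hstep := IMove_proj hm2 (a := i) (x := i + 1) hab (Ne.symm d2)
    (by rw [h1]; exact Ne.symm d4)
  rw [hstep, h2, h1]
  exact proj_junction1 hm2 (by omega) (by omega)

lemma coh_core {m : ℕ} (hm2 : 2 ≤ m) {f : ZMod (2 * m) → ZMod (2 * m)}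
    (hinv : Function.Involutive f) {i j x : ZMod (2 * m)}
    (h1 : f i = j + 1) (h2 : f (i + 1) = j)
    (d1 : i ≠ j) (d3 : i ≠ j + 1) (d4 : j ≠ i + 1) (d6 : i + 1 ≠ j + 1)
    (hxin : InArc (i + 1) j x) (hyout : ¬ InArc (i + 1) j (f x))
    (hxne1 : x ≠ i + 1) (hxne2 : x ≠ j) (hyne1 : f x ≠ i + 1) (hyne2 : f x ≠ j) :
    ∃ p q, IncoherentBigon (IMove f x) p q := by
  haveI : NeZero (2 * m) := ⟨by omega⟩
  haveI : NeZero (2 * (m - 1)) := ⟨by omega⟩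
  obtain ⟨hs0, hsT⟩ := hxin
  have hslt : (x - (i + 1)).val < 2 * m := ZMod.val_lt _
  have hTlt : (j - (i + 1)).val < 2 * m := ZMod.val_lt _
  have hUlt : (f x - (i + 1)).val < 2 * m := ZMod.val_lt _
  have hii1 : (i - (i + 1)).val = 2 * m - 1 := by
    have he : i - (i + 1) = -1 := by ring
    rw [he, neg_one_val (by omega)]
  have hTne : (j - (i + 1)).val ≠ 2 * m - 1 := by
    intro h
    have h3 := add_one_eq_of_dval_top h
    exact d1 (add_right_cancel h3).symm
  have hj1 : (j + 1 - (i + 1)).val = (j - (i + 1)).val + 1 := dval_add_one (by omega) (by omega)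
  -- f x avoids the four bigon points
  have hyne3 : f x ≠ j + 1 := by
    intro h
    have h3 := congrArg f h
    rw [hinv] at h3
    have h4 : f (j + 1) = i := by rw [← h1, hinv]
    rw [h4] at h3
    rw [h3, hii1] at hs0 hsT
    omega
  have hyne4 : f x ≠ i := by
    intro h
    have h3 := congrArg f h
    rw [hinv, h1] at h3
    rw [h3, hj1] at hsT
    omega
  have hU0 : 0 < (f x - (i + 1)).val := dval_pos hyne1
  have hUT : ¬ (0 < (f x - (i + 1)).val ∧ (f x - (i + 1)).val < (j - (i + 1)).val) :=
    fun h => hyout ⟨h.1, h.2⟩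
  have hUneT : (f x - (i + 1)).val ≠ (j - (i + 1)).val := dval_ne_of_ne hyne2
  have hUneT1 : (f x - (i + 1)).val ≠ (j - (i + 1)).val + 1 := by
    intro h
    exact hyne3 (dval_eq_iff.2 (by rw [hj1, h]))
  have hUnetop : (f x - (i + 1)).val ≠ 2 * m - 1 := by
    intro h
    exact hyne4 (dval_eq_iff.2 (by rw [hii1, h]))
  -- vals with base point x
  have hsymm1 : (i + 1 - x).val = 2 * m - (x - (i + 1)).val := dval_symm hxne1
  have hjx : (j - x).val < 2 * m := ZMod.val_lt _
  have hyx : (f x - x).val < 2 * m := ZMod.val_lt _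
  have hix : (i - x).val < 2 * m := ZMod.val_lt _
  have dj : (j - x).val = (j - (i + 1)).val - (x - (i + 1)).val := by
    rcases dval_triangle' x (i + 1) j with h | h <;> omega
  have dL : (f x - x).val = (f x - (i + 1)).val - (x - (i + 1)).val := by
    rcases dval_triangle' x (i + 1) (f x) with h | h <;> omega
  have di : (i - x).val = 2 * m - 1 - (x - (i + 1)).val := by
    rcases dval_triangle' x (i + 1) i with h | h <;> omega
  have dj1 : (j + 1 - x).val = (j - x).val + 1 := dval_add_one (by omega) (by omega)
  have hab : 0 < (f x - x).val := by omega
  -- the two proj-successor relations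
  have pj : imoveProj m x (f x) j = imoveProj m x (f x) (j + 1) + 1 :=
    proj_succ_rev hm2 (by omega) (by omega) (ne_of_dval_ne (a := x) (by omega))
  have pi1 : imoveProj m x (f x) (i + 1) = imoveProj m x (f x) i + 1 :=
    proj_succ_pres hm2 hab (by omega) (Ne.symm hxne1)
  -- the new chords
  have hxnei : x ≠ i := ne_of_dval_ne (a := i + 1) (by omega)
  have hxnej1 : x ≠ j + 1 := ne_of_dval_ne (a := i + 1) (by rw [hj1]; omega)
  have gi : IMove f x (imoveProj m x (f x) i) = imoveProj m x (f x) (j + 1) := by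
    rw [IMove_proj hm2 hab (Ne.symm hxnei) (Ne.symm hyne4), h1]
  have gi1 : IMove f x (imoveProj m x (f x) (i + 1)) = imoveProj m x (f x) j := by
    rw [IMove_proj hm2 hab (Ne.symm hxne1) (Ne.symm hyne1), h2]
  have pinj : ∀ u v : ZMod (2 * m), u ≠ x → u ≠ f x → v ≠ x → v ≠ f x → u ≠ v →
      imoveProj m x (f x) u ≠ imoveProj m x (f x) v := by
    intro u v hu1 hu2 hv1 hv2 huv h
    exact huv (proj_inj hm2 hab hu1 hu2 hv1 hv2 h)
  have dii1 : i ≠ i + 1 := ne_of_dval_ne (a := i + 1) (by rw [hii1, sub_self, ZMod.val_zero]; omega)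
  have djj1 : j ≠ j + 1 := ne_of_dval_ne (a := i + 1) (by rw [hj1]; omega)
  refine ⟨imoveProj m x (f x) i, imoveProj m x (f x) (j + 1), gi, ?_, ?_⟩
  · rw [← pi1, gi1, pj]
  · rw [← pi1, ← pj]
    exact card4_of
      (pinj i (j + 1) (Ne.symm hxnei) (Ne.symm hyne4) (Ne.symm hxnej1) (Ne.symm hyne3) d3)
      (pinj i (i + 1) (Ne.symm hxnei) (Ne.symm hyne4) (Ne.symm hxne1) (Ne.symm hyne1) dii1)
      (pinj i j (Ne.symm hxnei) (Ne.symm hyne4) (Ne.symm hxne2) (Ne.symm hyne2) d1)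
      (pinj (j + 1) (i + 1) (Ne.symm hxnej1) (Ne.symm hyne3) (Ne.symm hxne1) (Ne.symm hyne1)
        (Ne.symm d6))
      (pinj (j + 1) j (Ne.symm hxnej1) (Ne.symm hyne3) (Ne.symm hxne2) (Ne.symm hyne2)
        (Ne.symm djj1))
      (pinj (i + 1) j (Ne.symm hxne1) (Ne.symm hyne1) (Ne.symm hxne2) (Ne.symm hyne2)
        (Ne.symm d4))

lemma coh_step {m : ℕ} (hm : 1 ≤ m) {f : ZMod (2 * m) → ZMod (2 * m)}
    (hinv : Function.Involutive f) {i j : ZMod (2 * m)}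
    (hb : CoherentBigon f i j) :
    Reducible f ∨ ∃ a p q, IncoherentBigon (IMove f a) p q := by
  obtain ⟨h1, h2, hcard⟩ := hb
  have hm2 : 2 ≤ m := two_le_of_card4 hm hcard
  haveI : NeZero (2 * m) := ⟨by omega⟩
  obtain ⟨d1, d2, d3, d4, d5, d6⟩ := of_card4 hcard
  by_cases hred : Reducible f
  · exact Or.inl hred
  right
  rw [Reducible] at hred
  push_neg at hred
  obtain ⟨c, hc⟩ := hred (i + 1)
  obtain ⟨hc1, hc2, hc3, hc4, hc5⟩ := hc
  rw [h2] at hc2 hc4 hc5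
  rcases hc5 with ⟨hin, hout⟩ | ⟨hin, hout⟩
  · exact ⟨c, coh_core hm2 hinv h1 h2 d1 d3 d4 d6 hin hout hc1 hc2 hc3 hc4⟩
  · refine ⟨f c, coh_core hm2 hinv h1 h2 d1 d3 d4 d6 hin ?_ hc3 hc4 ?_ ?_⟩
    · rw [hinv]; exact hout
    · rw [hinv]; exact hc1
    · rw [hinv]; exact hc2

lemma bigon_RL2 {m : ℕ} (hm : 1 ≤ m) {f : ZMod (2 * m) → ZMod (2 * m)}
    (hinv : Function.Involutive f) {i j : ZMod (2 * m)}
    (h : IncoherentBigon f i j ∨ CoherentBigon f i j) : ReductivityLe 2 f := by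
  rcases h with h | h
  · obtain ⟨a, ha⟩ := incoh_step hm h
    exact RL_step a (RL_succ 0 (RL_of_reducible 0 ha))
  · rcases coh_step hm hinv h with hr | ⟨a, p, q, hb⟩
    · exact RL_of_reducible 2 hr
    · have hm2 : 2 ≤ m := two_le_of_card4 hm h.2.2
      obtain ⟨a2, ha2⟩ := incoh_step (m := m - 1) (by omega) hb
      exact RL_step a (RL_step a2 (RL_of_reducible 0 ha2))

end Bigon


/-! ### Good-chord lemmas -/

section GoodChord

variable {m : ℕ}

lemma succ_dval {M : ℕ} (hM : 2 ≤ M) (a : ZMod M) : (a + 1 - a).val = 1 := by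
  haveI : NeZero M := ⟨by omega⟩
  have he : a + 1 - a = 1 := by ring
  rw [he, ZMod.val_one'' (by omega)]

lemma self_ne_succ {M : ℕ} (hM : 2 ≤ M) (a : ZMod M) : a ≠ a + 1 := by
  haveI : NeZero M := ⟨by omega⟩
  apply ne_of_dval_ne (a := a)
  rw [sub_self, ZMod.val_zero, succ_dval hM]
  omega

lemma pred_dval {M : ℕ} (hM : 2 ≤ M) (a : ZMod M) : (a - 1 - a).val = M - 1 := by
  haveI : NeZero M := ⟨by omega⟩
  have he : a - 1 - a = -1 := by ring
  rw [he, neg_one_val hM]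

lemma good_core (hm2 : 2 ≤ m) {f : ZMod (2 * m) → ZMod (2 * m)}
    {a b w x1 x2 ra rb : ZMod (2 * m)}
    (hb : f a = b) (hba : b ≠ a)
    (hx1 : f x1 = ra) (hx2 : f x2 = rb)
    (hpair : (x1 = w ∧ x2 = w + 1) ∨ (x1 = w + 1 ∧ x2 = w))
    (pj : imoveProj m a b rb = imoveProj m a b ra + 1)
    (hraa : ra ≠ a) (hrab : ra ≠ b) (hrba : rb ≠ a) (hrbb : rb ≠ b) (hrarb : ra ≠ rb)
    (hwa : w ≠ a) (hw1a : w + 1 ≠ a) (hwb : w ≠ b) (hw1b : w + 1 ≠ b)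
    (hwra : w ≠ ra) (hw1ra : w + 1 ≠ ra) (hwrb : w ≠ rb) (hw1rb : w + 1 ≠ rb) :
    ∃ p q, IncoherentBigon (IMove f a) p q ∨ CoherentBigon (IMove f a) p q := by
  haveI : NeZero (2 * m) := ⟨by omega⟩
  haveI : NeZero (2 * (m - 1)) := ⟨by omega⟩
  have hL0 : 0 < (b - a).val := dval_pos hba
  have hLlt : (b - a).val < 2 * m := ZMod.val_lt _
  have he0 : 0 < (w - a).val := dval_pos hwa
  have helt : (w - a).val < 2 * m := ZMod.val_lt _
  have hetop : (w - a).val ≠ 2 * m - 1 := fun h => hw1a (add_one_eq_of_dval_top h)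
  have hw1val : (w + 1 - a).val = (w - a).val + 1 := dval_add_one (by omega) (by omega)
  have heL : (w - a).val ≠ (b - a).val := dval_ne_of_ne hwb
  have heL1 : (w + 1 - a).val ≠ (b - a).val := dval_ne_of_ne hw1b
  have hab : 0 < (f a - a).val := by rw [hb]; exact hL0
  have gapp : ∀ u : ZMod (2 * m), u ≠ a → u ≠ b →
      IMove f a (imoveProj m a b u) = imoveProj m a b (f u) := by
    intro u h1 h2
    have h3 := IMove_proj hm2 (a := a) (x := u) hab h1 (by rw [hb]; exact h2)
    rwa [hb] at h3
  have pinj : ∀ u v : ZMod (2 * m), u ≠ a → u ≠ b → v ≠ a → v ≠ b → u ≠ v →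
      imoveProj m a b u ≠ imoveProj m a b v := by
    intro u v hu1 hu2 hv1 hv2 huv h
    exact huv (proj_inj hm2 hL0 hu1 hu2 hv1 hv2 h)
  have hww1 : w ≠ w + 1 := self_ne_succ (by omega) w
  rcases lt_or_gt_of_ne heL with hlt | hgt
  · -- pair (w, w+1) in the reversed arc
    have prev : imoveProj m a b w = imoveProj m a b (w + 1) + 1 :=
      proj_succ_rev hm2 he0 hlt hw1b
    rcases hpair with ⟨he1, he2⟩ | ⟨he1, he2⟩ <;> rw [he1] at hx1 <;> rw [he2] at hx2
    · -- x1 = w : coherent bigon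
      refine ⟨imoveProj m a b (w + 1), imoveProj m a b ra, Or.inr ⟨?_, ?_, ?_⟩⟩
      · rw [gapp (w + 1) hw1a hw1b, hx2, pj]
      · rw [← prev, gapp w hwa hwb, hx1]
      · rw [← prev, ← pj]
        exact card4_of (pinj _ _ hw1a hw1b hraa hrab hw1ra)
          (pinj _ _ hw1a hw1b hwa hwb hww1.symm)
          (pinj _ _ hw1a hw1b hrba hrbb hw1rb)
          (pinj _ _ hraa hrab hwa hwb (Ne.symm hwra))
          (pinj _ _ hraa hrab hrba hrbb hrarb)
          (pinj _ _ hwa hwb hrba hrbb hwrb)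
    · -- x1 = w + 1 : incoherent bigon
      refine ⟨imoveProj m a b (w + 1), imoveProj m a b ra, Or.inl ⟨?_, ?_, ?_⟩⟩
      · rw [gapp (w + 1) hw1a hw1b, hx1]
      · rw [← prev, gapp w hwa hwb, hx2, pj]
      · rw [← prev, ← pj]
        exact card4_of (pinj _ _ hw1a hw1b hraa hrab hw1ra)
          (pinj _ _ hw1a hw1b hwa hwb hww1.symm)
          (pinj _ _ hw1a hw1b hrba hrbb hw1rb)
          (pinj _ _ hraa hrab hwa hwb (Ne.symm hwra))
          (pinj _ _ hraa hrab hrba hrbb hrarb)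
          (pinj _ _ hwa hwb hrba hrbb hwrb)
  · -- pair (w, w+1) outside the reversed arc
    have ppres : imoveProj m a b (w + 1) = imoveProj m a b w + 1 :=
      proj_succ_pres hm2 hL0 hgt hw1a
    rcases hpair with ⟨he1, he2⟩ | ⟨he1, he2⟩ <;> rw [he1] at hx1 <;> rw [he2] at hx2
    · -- x1 = w : incoherent bigon
      refine ⟨imoveProj m a b w, imoveProj m a b ra, Or.inl ⟨?_, ?_, ?_⟩⟩
      · rw [gapp w hwa hwb, hx1]
      · rw [← ppres, gapp (w + 1) hw1a hw1b, hx2, pj]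
      · rw [← ppres, ← pj]
        exact card4_of (pinj _ _ hwa hwb hraa hrab hwra)
          (pinj _ _ hwa hwb hw1a hw1b hww1)
          (pinj _ _ hwa hwb hrba hrbb hwrb)
          (pinj _ _ hraa hrab hw1a hw1b (Ne.symm hw1ra))
          (pinj _ _ hraa hrab hrba hrbb hrarb)
          (pinj _ _ hw1a hw1b hrba hrbb hw1rb)
    · -- x1 = w + 1 : coherent bigon
      refine ⟨imoveProj m a b w, imoveProj m a b ra, Or.inr ⟨?_, ?_, ?_⟩⟩
      · rw [gapp w hwa hwb, hx2, pj]
      · rw [← ppres, gapp (w + 1) hw1a hw1b, hx1]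
      · rw [← ppres, ← pj]
        exact card4_of (pinj _ _ hwa hwb hraa hrab hwra)
          (pinj _ _ hwa hwb hw1a hw1b hww1)
          (pinj _ _ hwa hwb hrba hrbb hwrb)
          (pinj _ _ hraa hrab hw1a hw1b (Ne.symm hw1ra))
          (pinj _ _ hraa hrab hrba hrbb hrarb)
          (pinj _ _ hw1a hw1b hrba hrbb hw1rb)

lemma good_chord1 (hm2 : 2 ≤ m) {f : ZMod (2 * m) → ZMod (2 * m)}
    {a b w x1 x2 : ZMod (2 * m)}
    (hb : f a = b) (hba : b ≠ a) (hbne1 : b ≠ a + 1) (hbne2 : b + 1 ≠ a)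
    (hx1 : f x1 = a + 1) (hx2 : f x2 = b + 1)
    (hpair : (x1 = w ∧ x2 = w + 1) ∨ (x1 = w + 1 ∧ x2 = w))
    (hwa : w ≠ a) (hw1a : w + 1 ≠ a) (hwb : w ≠ b) (hw1b : w + 1 ≠ b)
    (hwa1 : w ≠ a + 1) (hw1a1 : w + 1 ≠ a + 1) (hwb1 : w ≠ b + 1) (hw1b1 : w + 1 ≠ b + 1) :
    ∃ p q, IncoherentBigon (IMove f a) p q ∨ CoherentBigon (IMove f a) p q := by
  haveI : NeZero (2 * m) := ⟨by omega⟩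
  have hL0 : 0 < (b - a).val := dval_pos hba
  have hLlt : (b - a).val < 2 * m := ZMod.val_lt _
  have hL1 : (b - a).val ≠ 1 := fun h =>
    hbne1 (dval_eq_iff.2 (by rw [h, succ_dval (by omega)]))
  have hLtop : (b - a).val ≠ 2 * m - 1 := fun h => hbne2 (add_one_eq_of_dval_top h)
  exact good_core hm2 hb hba hx1 hx2 hpair (proj_junction1 hm2 (by omega) (by omega))
    (Ne.symm (self_ne_succ (by omega) a)) (Ne.symm hbne1) hbne2
    (Ne.symm (self_ne_succ (by omega) b)) (fun h => hba.symm (add_right_cancel h))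
    hwa hw1a hwb hw1b hwa1 hw1a1 hwb1 hw1b1

lemma good_chord2 (hm2 : 2 ≤ m) {f : ZMod (2 * m) → ZMod (2 * m)}
    {a b w x1 x2 : ZMod (2 * m)}
    (hb : f a = b) (hba : b ≠ a) (hbna1 : b ≠ a - 1) (hb1na : b - 1 ≠ a)
    (hx1 : f x1 = a - 1) (hx2 : f x2 = b - 1)
    (hpair : (x1 = w ∧ x2 = w + 1) ∨ (x1 = w + 1 ∧ x2 = w))
    (hwa : w ≠ a) (hw1a : w + 1 ≠ a) (hwb : w ≠ b) (hw1b : w + 1 ≠ b)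
    (hw1a1 : w + 1 ≠ a - 1) (hw1b1 : w + 1 ≠ b - 1) :
    ∃ p q, IncoherentBigon (IMove f a) p q ∨ CoherentBigon (IMove f a) p q := by
  haveI : NeZero (2 * m) := ⟨by omega⟩
  have hL0 : 0 < (b - a).val := dval_pos hba
  have hLlt : (b - a).val < 2 * m := ZMod.val_lt _
  have hL1 : (b - a).val ≠ 1 := by
    intro h
    apply hb1na
    have h2 : b = a + 1 := dval_eq_iff.2 (by rw [h, succ_dval (by omega)])
    rw [h2]; ring
  have hLtop : (b - a).val ≠ 2 * m - 1 := by
    intro h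
    apply hbna1
    have h2 := add_one_eq_of_dval_top h
    rw [← h2]; ring
  have hwa1 : w ≠ a - 1 := by
    intro h
    apply hw1a
    rw [h]; ring
  have hwb1 : w ≠ b - 1 := by
    intro h
    apply hw1b
    rw [h]; ring
  exact good_core hm2 hb hba hx1 hx2 hpair (proj_junction2 hm2 (by omega) (by omega))
    (by apply ne_of_dval_ne (a := a); rw [pred_dval (by omega), sub_self, ZMod.val_zero]; omega)
    (Ne.symm hbna1) hb1na
    (by apply ne_of_dval_ne (a := b); rw [pred_dval (by omega), sub_self, ZMod.val_zero]; omega)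
    (fun h => hba.symm (by rw [← sub_add_cancel a 1, ← sub_add_cancel b 1, h]))
    hwa hw1a hwb hw1b hwa1 hw1a1 hwb1 hw1b1

end GoodChord


/-! ### card-6 helpers -/

section Card6

lemma card_le_five {α : Type*} [DecidableEq α] (a b c d e : α) :
    ({a, b, c, d, e} : Finset α).card ≤ 5 := by
  apply (Finset.card_insert_le _ _).trans
  apply Nat.succ_le_succ
  apply (Finset.card_insert_le _ _).trans
  apply Nat.succ_le_succ
  exact card_le_three c d e

lemma of_card6 {α : Type*} [DecidableEq α] {a1 a2 a3 a4 a5 a6 : α}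
    (h : ({a1, a2, a3, a4, a5, a6} : Finset α).card = 6) :
    (a1 ≠ a2 ∧ a1 ≠ a3 ∧ a1 ≠ a4 ∧ a1 ≠ a5 ∧ a1 ≠ a6) ∧
    (a2 ≠ a3 ∧ a2 ≠ a4 ∧ a2 ≠ a5 ∧ a2 ≠ a6) ∧
    (a3 ≠ a4 ∧ a3 ≠ a5 ∧ a3 ≠ a6) ∧ (a4 ≠ a5 ∧ a4 ≠ a6) ∧ a5 ≠ a6 := by
  refine ⟨⟨?_, ?_, ?_, ?_, ?_⟩, ⟨?_, ?_, ?_, ?_⟩, ⟨?_, ?_, ?_⟩, ⟨?_, ?_⟩, ?_⟩ <;> rintro rfl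
  · have hsub : ({a1, a1, a3, a4, a5, a6} : Finset α) ⊆ {a1, a3, a4, a5, a6} := by
      intro x hx
      simp only [Finset.mem_insert, Finset.mem_singleton] at hx ⊢
      rcases hx with h | h | h | h | h | h <;> subst h <;> simp
    have hc1 := Finset.card_le_card hsub
    have hc2 := card_le_five a1 a3 a4 a5 a6
    omega
  · have hsub : ({a1, a2, a1, a4, a5, a6} : Finset α) ⊆ {a1, a2, a4, a5, a6} := by
      intro x hx
      simp only [Finset.mem_insert, Finset.mem_singleton] at hx ⊢
      rcases hx with h | h | h | h | h | h <;> subst h <;> simp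
    have hc1 := Finset.card_le_card hsub
    have hc2 := card_le_five a1 a2 a4 a5 a6
    omega
  · have hsub : ({a1, a2, a3, a1, a5, a6} : Finset α) ⊆ {a1, a2, a3, a5, a6} := by
      intro x hx
      simp only [Finset.mem_insert, Finset.mem_singleton] at hx ⊢
      rcases hx with h | h | h | h | h | h <;> subst h <;> simp
    have hc1 := Finset.card_le_card hsub
    have hc2 := card_le_five a1 a2 a3 a5 a6
    omega
  · have hsub : ({a1, a2, a3, a4, a1, a6} : Finset α) ⊆ {a1, a2, a3, a4, a6} := by
      intro x hx
      simp only [Finset.mem_insert, Finset.mem_singleton] at hx ⊢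
      rcases hx with h | h | h | h | h | h <;> subst h <;> simp
    have hc1 := Finset.card_le_card hsub
    have hc2 := card_le_five a1 a2 a3 a4 a6
    omega
  · have hsub : ({a1, a2, a3, a4, a5, a1} : Finset α) ⊆ {a1, a2, a3, a4, a5} := by
      intro x hx
      simp only [Finset.mem_insert, Finset.mem_singleton] at hx ⊢
      rcases hx with h | h | h | h | h | h <;> subst h <;> simp
    have hc1 := Finset.card_le_card hsub
    have hc2 := card_le_five a1 a2 a3 a4 a5
    omega
  · have hsub : ({a1, a2, a2, a4, a5, a6} : Finset α) ⊆ {a1, a2, a4, a5, a6} := by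
      intro x hx
      simp only [Finset.mem_insert, Finset.mem_singleton] at hx ⊢
      rcases hx with h | h | h | h | h | h <;> subst h <;> simp
    have hc1 := Finset.card_le_card hsub
    have hc2 := card_le_five a1 a2 a4 a5 a6
    omega
  · have hsub : ({a1, a2, a3, a2, a5, a6} : Finset α) ⊆ {a1, a2, a3, a5, a6} := by
      intro x hx
      simp only [Finset.mem_insert, Finset.mem_singleton] at hx ⊢
      rcases hx with h | h | h | h | h | h <;> subst h <;> simp
    have hc1 := Finset.card_le_card hsub
    have hc2 := card_le_five a1 a2 a3 a5 a6
    omega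
  · have hsub : ({a1, a2, a3, a4, a2, a6} : Finset α) ⊆ {a1, a2, a3, a4, a6} := by
      intro x hx
      simp only [Finset.mem_insert, Finset.mem_singleton] at hx ⊢
      rcases hx with h | h | h | h | h | h <;> subst h <;> simp
    have hc1 := Finset.card_le_card hsub
    have hc2 := card_le_five a1 a2 a3 a4 a6
    omega
  · have hsub : ({a1, a2, a3, a4, a5, a2} : Finset α) ⊆ {a1, a2, a3, a4, a5} := by
      intro x hx
      simp only [Finset.mem_insert, Finset.mem_singleton] at hx ⊢
      rcases hx with h | h | h | h | h | h <;> subst h <;> simp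
    have hc1 := Finset.card_le_card hsub
    have hc2 := card_le_five a1 a2 a3 a4 a5
    omega
  · have hsub : ({a1, a2, a3, a3, a5, a6} : Finset α) ⊆ {a1, a2, a3, a5, a6} := by
      intro x hx
      simp only [Finset.mem_insert, Finset.mem_singleton] at hx ⊢
      rcases hx with h | h | h | h | h | h <;> subst h <;> simp
    have hc1 := Finset.card_le_card hsub
    have hc2 := card_le_five a1 a2 a3 a5 a6
    omega
  · have hsub : ({a1, a2, a3, a4, a3, a6} : Finset α) ⊆ {a1, a2, a3, a4, a6} := by
      intro x hx
      simp only [Finset.mem_insert, Finset.mem_singleton] at hx ⊢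
      rcases hx with h | h | h | h | h | h <;> subst h <;> simp
    have hc1 := Finset.card_le_card hsub
    have hc2 := card_le_five a1 a2 a3 a4 a6
    omega
  · have hsub : ({a1, a2, a3, a4, a5, a3} : Finset α) ⊆ {a1, a2, a3, a4, a5} := by
      intro x hx
      simp only [Finset.mem_insert, Finset.mem_singleton] at hx ⊢
      rcases hx with h | h | h | h | h | h <;> subst h <;> simp
    have hc1 := Finset.card_le_card hsub
    have hc2 := card_le_five a1 a2 a3 a4 a5
    omega
  · have hsub : ({a1, a2, a3, a4, a4, a6} : Finset α) ⊆ {a1, a2, a3, a4, a6} := by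
      intro x hx
      simp only [Finset.mem_insert, Finset.mem_singleton] at hx ⊢
      rcases hx with h | h | h | h | h | h <;> subst h <;> simp
    have hc1 := Finset.card_le_card hsub
    have hc2 := card_le_five a1 a2 a3 a4 a6
    omega
  · have hsub : ({a1, a2, a3, a4, a5, a4} : Finset α) ⊆ {a1, a2, a3, a4, a5} := by
      intro x hx
      simp only [Finset.mem_insert, Finset.mem_singleton] at hx ⊢
      rcases hx with h | h | h | h | h | h <;> subst h <;> simp
    have hc1 := Finset.card_le_card hsub
    have hc2 := card_le_five a1 a2 a3 a4 a5
    omega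
  · have hsub : ({a1, a2, a3, a4, a5, a5} : Finset α) ⊆ {a1, a2, a3, a4, a5} := by
      intro x hx
      simp only [Finset.mem_insert, Finset.mem_singleton] at hx ⊢
      rcases hx with h | h | h | h | h | h <;> subst h <;> simp
    have hc1 := Finset.card_le_card hsub
    have hc2 := card_le_five a1 a2 a3 a4 a5
    omega

lemma three_le_of_card6 {m : ℕ} (hm : 1 ≤ m) {s : Finset (ZMod (2 * m))}
    (h : s.card = 6) : 3 ≤ m := by
  haveI : NeZero (2 * m) := ⟨by omega⟩
  have hc := Finset.card_le_univ s
  rw [h, ZMod.card] at hc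
  omega

end Card6


/-! ### Trigon handling -/

section Trigon

variable {m : ℕ}

lemma good_finish1 (hm2 : 2 ≤ m) {f : ZMod (2 * m) → ZMod (2 * m)}
    (hinv : Function.Involutive f) {a b w x1 x2 : ZMod (2 * m)}
    (hb : f a = b) (hba : b ≠ a)
    (hx1 : f x1 = a + 1) (hx2 : f x2 = b + 1)
    (hpair : (x1 = w ∧ x2 = w + 1) ∨ (x1 = w + 1 ∧ x2 = w))
    (hwa : w ≠ a) (hw1a : w + 1 ≠ a) (hwb : w ≠ b) (hw1b : w + 1 ≠ b)
    (hwa1 : w ≠ a + 1) (hw1a1 : w + 1 ≠ a + 1) (hwb1 : w ≠ b + 1) (hw1b1 : w + 1 ≠ b + 1) :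
    ReductivityLe 3 f := by
  by_cases h1 : b = a + 1
  · exact RL_of_reducible 3 (adj_reducible (by omega) (by rw [hb, h1]))
  by_cases h2 : b + 1 = a
  · have hfb : f b = b + 1 := by
      have h3 : f b = a := by rw [← hb, hinv]
      rw [h3, ← h2]
    exact RL_of_reducible 3 (adj_reducible (by omega) hfb)
  obtain ⟨p, q, hbig⟩ := good_chord1 (by omega) hb hba h1 h2 hx1 hx2 hpair
    hwa hw1a hwb hw1b hwa1 hw1a1 hwb1 hw1b1
  have hfa : f a ≠ a := by rw [hb]; exact hba
  have ginv : Function.Involutive (IMove f a) := IMove_invol (by omega) hinv hfa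
  exact RL_step a (bigon_RL2 (m := m - 1) (by omega) ginv hbig)

lemma good_finish2 (hm2 : 2 ≤ m) {f : ZMod (2 * m) → ZMod (2 * m)}
    (hinv : Function.Involutive f) {a b w x1 x2 : ZMod (2 * m)}
    (hb : f a = b) (hba : b ≠ a)
    (hx1 : f x1 = a - 1) (hx2 : f x2 = b - 1)
    (hpair : (x1 = w ∧ x2 = w + 1) ∨ (x1 = w + 1 ∧ x2 = w))
    (hwa : w ≠ a) (hw1a : w + 1 ≠ a) (hwb : w ≠ b) (hw1b : w + 1 ≠ b)
    (hw1a1 : w + 1 ≠ a - 1) (hw1b1 : w + 1 ≠ b - 1) :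
    ReductivityLe 3 f := by
  by_cases h1 : b = a + 1
  · exact RL_of_reducible 3 (adj_reducible (by omega) (by rw [hb, h1]))
  by_cases h2 : b = a - 1
  · have hfb : f b = b + 1 := by
      have h3 : f b = a := by rw [← hb, hinv]
      rw [h3, h2]; ring
    exact RL_of_reducible 3 (adj_reducible (by omega) hfb)
  have h2' : b - 1 ≠ a := by
    intro h
    apply h1
    rw [← h]; ring
  obtain ⟨p, q, hbig⟩ := good_chord2 (by omega) hb hba h2 h2' hx1 hx2 hpair
    hwa hw1a hwb hw1b hw1a1 hw1b1
  have hfa : f a ≠ a := by rw [hb]; exact hba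
  have ginv : Function.Involutive (IMove f a) := IMove_invol (by omega) hinv hfa
  exact RL_step a (bigon_RL2 (m := m - 1) (by omega) ginv hbig)

lemma configZ_ext (hm3 : 3 ≤ m) {f : ZMod (2 * m) → ZMod (2 * m)}
    (hinv : Function.Involutive f) (hfree : ∀ z, f z ≠ z) {i j k x : ZMod (2 * m)}
    (hfi : f i = j + 1) (hfj : f j = k + 1) (hfk : f k = i + 1)
    (e12 : i ≠ i + 1) (e14 : i ≠ j + 1) (e15 : i ≠ k) (e16 : i ≠ k + 1)
    (e25 : i + 1 ≠ k) (e26 : i + 1 ≠ k + 1)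
    (e35 : j ≠ k) (e36 : j ≠ k + 1) (e45 : j + 1 ≠ k) (e46 : j + 1 ≠ k + 1)
    (hxin : InArc i (j + 1) x) (hyout : ¬ InArc i (j + 1) (f x))
    (nx1 : x ≠ i) (nx2 : x ≠ i + 1) (nx3 : x ≠ j) (nx4 : x ≠ j + 1)
    (nx5 : x ≠ k) (nx6 : x ≠ k + 1) :
    ReductivityLe 4 f := by
  haveI : NeZero (2 * m) := ⟨by omega⟩
  have hswap : ∀ u v : ZMod (2 * m), f u = v → f v = u := by
    intro u v h; rw [← h]; exact hinv u
  have hfj1 : f (j + 1) = i := hswap _ _ hfi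
  have hfk1 : f (k + 1) = j := hswap _ _ hfj
  have hfi1 : f (i + 1) = k := hswap _ _ hfk
  have ny1 : f x ≠ i := fun h => nx4 (((hswap _ _ h).symm.trans hfi))
  have ny2 : f x ≠ i + 1 := fun h => nx5 (((hswap _ _ h).symm.trans hfi1))
  have ny3 : f x ≠ j := fun h => nx6 (((hswap _ _ h).symm.trans hfj))
  have ny4 : f x ≠ j + 1 := fun h => nx1 (((hswap _ _ h).symm.trans hfj1))
  have ny5 : f x ≠ k := fun h => nx2 (((hswap _ _ h).symm.trans hfk))
  have ny6 : f x ≠ k + 1 := fun h => nx3 (((hswap _ _ h).symm.trans hfk1))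
  obtain ⟨hs0, hsD⟩ := hxin
  have hD : (j + 1 - i).val < 2 * m := ZMod.val_lt _
  have hvi1 : (i + 1 - i).val = 1 := succ_dval (by omega) i
  have hs1 : (x - i).val ≠ 1 := fun h => nx2 (dval_eq_iff.2 (by rw [h, hvi1]))
  have hDj : (j - i).val = (j + 1 - i).val - 1 := by
    have h0 := dval_sub_one (M := 2 * m) (by omega) (a := i) (x := j + 1) (by omega)
    rwa [show j + 1 - 1 = j by ring] at h0
  have hsj : (x - i).val ≠ (j - i).val := dval_ne_of_ne nx3
  have hu0 : 0 < (f x - i).val := dval_pos ny1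
  have huD : ¬ (0 < (f x - i).val ∧ (f x - i).val < (j + 1 - i).val) := hyout
  have huD' : (f x - i).val ≠ (j + 1 - i).val := dval_ne_of_ne ny4
  have hult : (f x - i).val < 2 * m := ZMod.val_lt _
  have hsymm : (i - x).val = 2 * m - (x - i).val := dval_symm nx1
  have hlt1 : (j + 1 - x).val < 2 * m := ZMod.val_lt _
  have hlt2 : (j - x).val < 2 * m := ZMod.val_lt _
  have hlt3 : (f x - x).val < 2 * m := ZMod.val_lt _
  have dxj1 : (j + 1 - x).val = (j + 1 - i).val - (x - i).val := by
    rcases dval_triangle' x i (j + 1) with h | h <;> omega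
  have dxL : (f x - x).val = (f x - i).val - (x - i).val := by
    rcases dval_triangle' x i (f x) with h | h <;> omega
  have dxj : (j - x).val = (j - i).val - (x - i).val := by
    rcases dval_triangle' x i j with h | h <;> omega
  have dxi1 : (i + 1 - x).val = 2 * m - (x - i).val + 1 := by
    have h0 := dval_add_one (N := 2 * m) (a := x) (x := i) (by omega) (by omega)
    omega
  have hab : 0 < (f x - x).val := dval_pos (hfree x)
  have hkneq : (k - x).val ≠ (f x - x).val := dval_ne_of_ne (Ne.symm ny5)
  have hk0 : 0 < (k - x).val := dval_pos (Ne.symm nx5)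
  have hk1neq : (k + 1 - x).val ≠ (f x - x).val := dval_ne_of_ne (Ne.symm ny6)
  have hktop : (k - x).val ≠ 2 * m - 1 := fun h => nx6 (add_one_eq_of_dval_top h).symm
  have dxk1 : (k + 1 - x).val = (k - x).val + 1 :=
    dval_add_one (by omega) (by have := ZMod.val_lt (k - x); omega)
  have pjj : imoveProj m x (f x) j = imoveProj m x (f x) (j + 1) + 1 :=
    proj_succ_rev (b := f x) (by omega) (by omega) (by omega) (Ne.symm ny4)
  have pii : imoveProj m x (f x) (i + 1) = imoveProj m x (f x) i + 1 :=
    proj_succ_pres (b := f x) (by omega) hab (by omega) (Ne.symm nx2)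
  have gapp : ∀ u, u ≠ x → u ≠ f x →
      IMove f x (imoveProj m x (f x) u) = imoveProj m x (f x) (f u) :=
    fun u h1 h2 => IMove_proj (by omega) hab h1 h2
  have pinj : ∀ u v, u ≠ x → u ≠ f x → v ≠ x → v ≠ f x → u ≠ v →
      imoveProj m x (f x) u ≠ imoveProj m x (f x) v :=
    fun u v h1 h2 h3 h4 h5 h => h5 (proj_inj (by omega) hab h1 h2 h3 h4 h)
  have ginv : Function.Involutive (IMove f x) := IMove_invol (by omega) hinv (hfree x)
  have hga : IMove f x (imoveProj m x (f x) i) = imoveProj m x (f x) (j + 1) := by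
    rw [gapp i (Ne.symm nx1) (Ne.symm ny1), hfi]
  have hgk : IMove f x (imoveProj m x (f x) k) = imoveProj m x (f x) (i + 1) := by
    rw [gapp k (Ne.symm nx5) (Ne.symm ny5), hfk]
  have hgk1 : IMove f x (imoveProj m x (f x) (k + 1)) = imoveProj m x (f x) j := by
    rw [gapp (k + 1) (Ne.symm nx6) (Ne.symm ny6), hfk1]
  have hba' : imoveProj m x (f x) (j + 1) ≠ imoveProj m x (f x) i :=
    pinj (j + 1) i (Ne.symm nx4) (Ne.symm ny4) (Ne.symm nx1) (Ne.symm ny1) (Ne.symm e14)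
  apply RL_step x
  rcases lt_or_gt_of_ne hkneq with hkin | hkout
  · -- pair (k, k+1) lies in the reversed arc
    have pkk : imoveProj m x (f x) k = imoveProj m x (f x) (k + 1) + 1 :=
      proj_succ_rev (b := f x) (by omega) hk0 hkin (Ne.symm ny6)
    exact good_finish1 (m := m - 1) (by omega) ginv hga hba'
      (x1 := imoveProj m x (f x) k) (x2 := imoveProj m x (f x) (k + 1))
      (w := imoveProj m x (f x) (k + 1))
      (by rw [hgk, pii]) (by rw [hgk1, pjj]) (Or.inr ⟨pkk, rfl⟩)
      (pinj (k + 1) i (Ne.symm nx6) (Ne.symm ny6) (Ne.symm nx1) (Ne.symm ny1) (Ne.symm e16))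
      (by rw [← pkk]
          exact pinj k i (Ne.symm nx5) (Ne.symm ny5) (Ne.symm nx1) (Ne.symm ny1) (Ne.symm e15))
      (pinj (k + 1) (j + 1) (Ne.symm nx6) (Ne.symm ny6) (Ne.symm nx4) (Ne.symm ny4)
        (Ne.symm e46))
      (by rw [← pkk]
          exact pinj k (j + 1) (Ne.symm nx5) (Ne.symm ny5) (Ne.symm nx4) (Ne.symm ny4)
            (Ne.symm e45))
      (by rw [← pii]
          exact pinj (k + 1) (i + 1) (Ne.symm nx6) (Ne.symm ny6) (Ne.symm nx2) (Ne.symm ny2)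
            (Ne.symm e26))
      (by rw [← pkk, ← pii]
          exact pinj k (i + 1) (Ne.symm nx5) (Ne.symm ny5) (Ne.symm nx2) (Ne.symm ny2)
            (Ne.symm e25))
      (by rw [← pjj]
          exact pinj (k + 1) j (Ne.symm nx6) (Ne.symm ny6) (Ne.symm nx3) (Ne.symm ny3)
            (Ne.symm e36))
      (by rw [← pkk, ← pjj]
          exact pinj k j (Ne.symm nx5) (Ne.symm ny5) (Ne.symm nx3) (Ne.symm ny3)
            (Ne.symm e35))
  · -- pair (k, k+1) lies outside the reversed arc
    have pk1 : imoveProj m x (f x) (k + 1) = imoveProj m x (f x) k + 1 :=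
      proj_succ_pres (b := f x) (by omega) hab hkout (Ne.symm nx6)
    exact good_finish1 (m := m - 1) (by omega) ginv hga hba'
      (x1 := imoveProj m x (f x) k) (x2 := imoveProj m x (f x) (k + 1))
      (w := imoveProj m x (f x) k)
      (by rw [hgk, pii]) (by rw [hgk1, pjj]) (Or.inl ⟨rfl, pk1⟩)
      (pinj k i (Ne.symm nx5) (Ne.symm ny5) (Ne.symm nx1) (Ne.symm ny1) (Ne.symm e15))
      (by rw [← pk1]
          exact pinj (k + 1) i (Ne.symm nx6) (Ne.symm ny6) (Ne.symm nx1) (Ne.symm ny1)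
            (Ne.symm e16))
      (pinj k (j + 1) (Ne.symm nx5) (Ne.symm ny5) (Ne.symm nx4) (Ne.symm ny4) (Ne.symm e45))
      (by rw [← pk1]
          exact pinj (k + 1) (j + 1) (Ne.symm nx6) (Ne.symm ny6) (Ne.symm nx4) (Ne.symm ny4)
            (Ne.symm e46))
      (by rw [← pii]
          exact pinj k (i + 1) (Ne.symm nx5) (Ne.symm ny5) (Ne.symm nx2) (Ne.symm ny2)
            (Ne.symm e25))
      (by rw [← pk1, ← pii]
          exact pinj (k + 1) (i + 1) (Ne.symm nx6) (Ne.symm ny6) (Ne.symm nx2) (Ne.symm ny2)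
            (Ne.symm e26))
      (by rw [← pjj]
          exact pinj k j (Ne.symm nx5) (Ne.symm ny5) (Ne.symm nx3) (Ne.symm ny3)
            (Ne.symm e35))
      (by rw [← pk1, ← pjj]
          exact pinj (k + 1) j (Ne.symm nx6) (Ne.symm ny6) (Ne.symm nx3) (Ne.symm ny3)
            (Ne.symm e36))


lemma val_sub_general {M : ℕ} [NeZero M] (u v : ZMod M) :
    (u - v).val = if v.val ≤ u.val then u.val - v.val else u.val + M - v.val := by
  have h := dval_triangle' (0 : ZMod M) v u
  rw [sub_zero, sub_zero] at h
  have h1 := ZMod.val_lt u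
  have h2 := ZMod.val_lt v
  have h3 := ZMod.val_lt (u - v)
  split_ifs with hle <;> rcases h with h | h <;> omega

lemma configZ_typeC (hm3 : 3 ≤ m) {f : ZMod (2 * m) → ZMod (2 * m)}
    (hinv : Function.Involutive f) (hfree : ∀ z, f z ≠ z) {i j k : ZMod (2 * m)}
    (hfi : f i = j + 1) (hfj : f j = k + 1) (hfk : f k = i + 1)
    (e13 : i ≠ j) (e14 : i ≠ j + 1) (e15 : i ≠ k) (e16 : i ≠ k + 1)
    (e24 : i + 1 ≠ j + 1)
    (horder : (j + 1 - i).val < (k - i).val)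
    (hnoc : ∀ c, c ≠ i → c ≠ i + 1 → c ≠ j → c ≠ j + 1 → c ≠ k → c ≠ k + 1 →
      ¬ Crosses f j c) :
    Reducible (IMove f i) := by
  haveI : NeZero (2 * m) := ⟨by omega⟩
  haveI : NeZero (2 * (m - 1)) := ⟨by omega⟩
  have hswap : ∀ u v : ZMod (2 * m), f u = v → f v = u := by
    intro u v h; rw [← h]; exact hinv u
  have hfj1 : f (j + 1) = i := hswap _ _ hfi
  have hfk1 : f (k + 1) = j := hswap _ _ hfj
  have hfi1 : f (i + 1) = k := hswap _ _ hfk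
  have hvi1 : (i + 1 - i).val = 1 := succ_dval (by omega) i
  have hD0 : 0 < (j + 1 - i).val := dval_pos (Ne.symm e14)
  have hD1 : (j + 1 - i).val ≠ 1 := fun h => e24 (dval_eq_iff.2 (by rw [hvi1, h])).symm
  have hDlt : (j + 1 - i).val < 2 * m := ZMod.val_lt _
  have hK2lt : (k - i).val < 2 * m := ZMod.val_lt _
  have hK2top : (k - i).val ≠ 2 * m - 1 := fun h => (Ne.symm e16) (add_one_eq_of_dval_top h)
  have hK1 : (k + 1 - i).val = (k - i).val + 1 := dval_add_one (by omega) (by omega)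
  have hDj : (j - i).val = (j + 1 - i).val - 1 := by
    have h0 := dval_sub_one (M := 2 * m) (by omega) (a := i) (x := j + 1) (by omega)
    rwa [show j + 1 - 1 = j by ring] at h0
  have hab : 0 < (f i - i).val := by rw [hfi]; exact hD0
  have hab' : 0 < (j + 1 - i).val := hD0
  have gapp : ∀ u, u ≠ i → u ≠ j + 1 →
      IMove f i (imoveProj m i (j + 1) u) = imoveProj m i (j + 1) (f u) := by
    intro u h1 h2
    have h3 := IMove_proj (n := m) (a := i) (x := u) (by omega) hab h1 (by rw [hfi]; exact h2)
    rwa [hfi] at h3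
  have hB1 := proj_val_lo (a := i) (b := j + 1) (x := i + 1) (by omega) (by omega) (by omega)
  rw [hvi1] at hB1
  have hB2 := proj_val_hi (a := i) (b := j + 1) (x := k) (by omega) horder
  have hB1lt : (imoveProj m i (j + 1) (i + 1)).val < 2 * (m - 1) := ZMod.val_lt _
  have hB2lt : (imoveProj m i (j + 1) k).val < 2 * (m - 1) := ZMod.val_lt _
  have arc_iff : ∀ z', z' ≠ i → z' ≠ j + 1 →
      (InArc (imoveProj m i (j + 1) (i + 1)) (imoveProj m i (j + 1) k)
          (imoveProj m i (j + 1) z') ↔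
        ((j + 1 - i).val < (z' - i).val ∧ (z' - i).val < (k - i).val)) := by
    intro z' h1 h2
    have hz0 : 0 < (z' - i).val := dval_pos h1
    have hzD : (z' - i).val ≠ (j + 1 - i).val := dval_ne_of_ne h2
    have hzlt : (z' - i).val < 2 * m := ZMod.val_lt _
    have hPzlt : (imoveProj m i (j + 1) z').val < 2 * (m - 1) := ZMod.val_lt _
    rw [inArc_iff, val_sub_general, val_sub_general]
    rcases lt_or_gt_of_ne hzD with hc | hc
    · have hz := proj_val_lo (a := i) (b := j + 1) (by omega) hz0 hc
      split_ifs <;> omega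
    · have hz := proj_val_hi (a := i) (b := j + 1) (by omega) hc
      split_ifs <;> omega
  have hregion : ∀ u, u ≠ i → u ≠ j + 1 →
      (j + 1 - i).val < (u - i).val → (u - i).val < (k - i).val →
      (j + 1 - i).val < (f u - i).val ∧ (f u - i).val < (k - i).val := by
    intro u hu1 hu2 h1 h2
    have nu2 : u ≠ i + 1 := fun h => by rw [h, hvi1] at h1; omega
    have nu3 : u ≠ j := fun h => by rw [h, hDj] at h1; omega
    have nu5 : u ≠ k := fun h => by rw [h] at h2; omega
    have nu6 : u ≠ k + 1 := fun h => by rw [h, hK1] at h2; omega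
    have nf1 : f u ≠ i := fun h => hu2 ((hswap _ _ h).symm.trans hfi)
    have nf2 : f u ≠ i + 1 := fun h => nu5 ((hswap _ _ h).symm.trans hfi1)
    have nf3 : f u ≠ j := fun h => nu6 ((hswap _ _ h).symm.trans hfj)
    have nf4 : f u ≠ j + 1 := fun h => hu1 ((hswap _ _ h).symm.trans hfj1)
    have nf5 : f u ≠ k := fun h => nu2 ((hswap _ _ h).symm.trans hfk)
    have nf6 : f u ≠ k + 1 := fun h => nu3 ((hswap _ _ h).symm.trans hfk1)
    have hv0 : 0 < (f u - i).val := dval_pos nf1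
    have hv1 : (f u - i).val ≠ 1 := fun h => nf2 (dval_eq_iff.2 (by rw [h, hvi1]))
    have hvj : (f u - i).val ≠ (j - i).val := dval_ne_of_ne nf3
    have hvj1 : (f u - i).val ≠ (j + 1 - i).val := dval_ne_of_ne nf4
    have hvk : (f u - i).val ≠ (k - i).val := dval_ne_of_ne nf5
    have hvk1 : (f u - i).val ≠ (k + 1 - i).val := dval_ne_of_ne nf6
    have hvlt : (f u - i).val < 2 * m := ZMod.val_lt _
    by_contra hcon
    rw [not_and_or] at hcon
    have hiji : (i - j).val = 2 * m - (j - i).val := dval_symm (Ne.symm e13)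
    have huj : (u - j).val = (u - i).val - (j - i).val := by
      have hujlt : (u - j).val < 2 * m := ZMod.val_lt _
      rcases dval_triangle' j i u with h | h <;> omega
    have hkj : (k + 1 - j).val = (k - i).val + 1 - (j - i).val := by
      have hkjlt : (k + 1 - j).val < 2 * m := ZMod.val_lt _
      rcases dval_triangle' j i (k + 1) with h | h <;> omega
    have hfuj : (f u - j).val = (f u - i).val + (i - j).val ∨
        (f u - j).val + 2 * m = (f u - i).val + (i - j).val := by
      have h0 := dval_triangle' j i (f u)
      exact h0
    have hfujlt : (f u - j).val < 2 * m := ZMod.val_lt _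
    apply hnoc u hu1 nu2 nu3 hu2 nu5 nu6
    refine ⟨nu3, by rw [hfj]; exact nu6, nf3, by rw [hfj]; exact nf6, ?_⟩
    rw [hfj]
    left
    constructor
    · exact ⟨by omega, by omega⟩
    · rintro ⟨hw1, hw2⟩
      rw [hkj] at hw2
      rcases hfuj with h | h <;> omega
  refine ⟨imoveProj m i (j + 1) (i + 1), fun c hc => ?_⟩
  obtain ⟨hc1, hc2, hc3, hc4, hxor⟩ := hc
  have hgB1 : IMove f i (imoveProj m i (j + 1) (i + 1)) = imoveProj m i (j + 1) k := by
    rw [gapp (i + 1) (Ne.symm (self_ne_succ (by omega) i)) e24, hfi1]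
  rw [hgB1] at hxor
  have hcz : c = imoveProj m i (j + 1) (imoveEmb m i (j + 1) c) :=
    (proj_emb (by omega) hab' c).symm
  have hz1 : imoveEmb m i (j + 1) c ≠ i := emb_ne_a (by omega) hab' c
  have hz2 : imoveEmb m i (j + 1) c ≠ j + 1 := emb_ne_b (by omega) hab' c
  have hf1 : f (imoveEmb m i (j + 1) c) ≠ i := fun h => hz2 ((hswap _ _ h).symm.trans hfi)
  have hf2 : f (imoveEmb m i (j + 1) c) ≠ j + 1 := fun h => hz1 ((hswap _ _ h).symm.trans hfj1)
  have hgc : IMove f i c = imoveProj m i (j + 1) (f (imoveEmb m i (j + 1) c)) := by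
    unfold IMove
    rw [hfi]
  rcases hxor with ⟨hin, hout⟩ | ⟨hin, hout⟩
  · have hin' : InArc (imoveProj m i (j + 1) (i + 1)) (imoveProj m i (j + 1) k)
        (imoveProj m i (j + 1) (imoveEmb m i (j + 1) c)) := by rw [← hcz]; exact hin
    have hr := (arc_iff _ hz1 hz2).1 hin'
    have hr2 := hregion _ hz1 hz2 hr.1 hr.2
    refine hout ?_
    rw [hgc]
    exact (arc_iff _ hf1 hf2).2 hr2
  · rw [hgc] at hin
    have hr := (arc_iff _ hf1 hf2).1 hin
    have hr2 := hregion _ hf1 hf2 hr.1 hr.2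
    rw [hinv] at hr2
    refine hout ?_
    rw [hcz]
    exact (arc_iff _ hz1 hz2).2 hr2


lemma configZ_RL4 (hm3 : 3 ≤ m) {f : ZMod (2 * m) → ZMod (2 * m)}
    (hinv : Function.Involutive f) (hfree : ∀ x, f x ≠ x) {i j k : ZMod (2 * m)}
    (hfi : f i = j + 1) (hfj : f j = k + 1) (hfk : f k = i + 1)
    (e12 : i ≠ i + 1) (e13 : i ≠ j) (e14 : i ≠ j + 1) (e15 : i ≠ k) (e16 : i ≠ k + 1)
    (e23 : i + 1 ≠ j) (e24 : i + 1 ≠ j + 1) (e25 : i + 1 ≠ k) (e26 : i + 1 ≠ k + 1)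
    (e34 : j ≠ j + 1) (e35 : j ≠ k) (e36 : j ≠ k + 1) (e45 : j + 1 ≠ k) (e46 : j + 1 ≠ k + 1)
    (e56 : k ≠ k + 1) : ReductivityLe 4 f := by
  haveI : NeZero (2 * m) := ⟨by omega⟩
  have hswap : ∀ u v : ZMod (2 * m), f u = v → f v = u := by
    intro u v h; rw [← h]; exact hinv u
  have hfj1 : f (j + 1) = i := hswap _ _ hfi
  have hfk1 : f (k + 1) = j := hswap _ _ hfj
  have hfi1 : f (i + 1) = k := hswap _ _ hfk
  by_cases hE1 : ∃ c, Crosses f i c ∧ c ≠ i ∧ c ≠ i + 1 ∧ c ≠ j ∧ c ≠ j + 1 ∧ c ≠ k ∧ c ≠ k + 1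
  · obtain ⟨c, hcr, n1, n2, n3, n4, n5, n6⟩ := hE1
    obtain ⟨-, -, -, -, hxor⟩ := hcr
    rw [hfi] at hxor
    rcases hxor with ⟨hin, hout⟩ | ⟨hin, hout⟩
    · exact configZ_ext hm3 hinv hfree hfi hfj hfk e12 e14 e15 e16 e25 e26 e35 e36 e45 e46
        hin hout n1 n2 n3 n4 n5 n6
    · have m1 : f c ≠ i := fun h => n4 ((hswap _ _ h).symm.trans hfi)
      have m2 : f c ≠ i + 1 := fun h => n5 ((hswap _ _ h).symm.trans hfi1)
      have m3 : f c ≠ j := fun h => n6 ((hswap _ _ h).symm.trans hfj)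
      have m4 : f c ≠ j + 1 := fun h => n1 ((hswap _ _ h).symm.trans hfj1)
      have m5 : f c ≠ k := fun h => n2 ((hswap _ _ h).symm.trans hfk)
      have m6 : f c ≠ k + 1 := fun h => n3 ((hswap _ _ h).symm.trans hfk1)
      exact configZ_ext hm3 hinv hfree hfi hfj hfk e12 e14 e15 e16 e25 e26 e35 e36 e45 e46
        hin (by rw [hinv]; exact hout) m1 m2 m3 m4 m5 m6
  by_cases hE2 : ∃ c, Crosses f j c ∧ c ≠ i ∧ c ≠ i + 1 ∧ c ≠ j ∧ c ≠ j + 1 ∧ c ≠ k ∧ c ≠ k + 1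
  · obtain ⟨c, hcr, n1, n2, n3, n4, n5, n6⟩ := hE2
    obtain ⟨-, -, -, -, hxor⟩ := hcr
    rw [hfj] at hxor
    rcases hxor with ⟨hin, hout⟩ | ⟨hin, hout⟩
    · exact configZ_ext hm3 hinv hfree hfj hfk hfi e34 e36 (Ne.symm e13) (Ne.symm e23)
        (Ne.symm e14) (Ne.symm e24) (Ne.symm e15) (Ne.symm e25) (Ne.symm e16) (Ne.symm e26)
        hin hout n3 n4 n5 n6 n1 n2
    · have m1 : f c ≠ i := fun h => n4 ((hswap _ _ h).symm.trans hfi)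
      have m2 : f c ≠ i + 1 := fun h => n5 ((hswap _ _ h).symm.trans hfi1)
      have m3 : f c ≠ j := fun h => n6 ((hswap _ _ h).symm.trans hfj)
      have m4 : f c ≠ j + 1 := fun h => n1 ((hswap _ _ h).symm.trans hfj1)
      have m5 : f c ≠ k := fun h => n2 ((hswap _ _ h).symm.trans hfk)
      have m6 : f c ≠ k + 1 := fun h => n3 ((hswap _ _ h).symm.trans hfk1)
      exact configZ_ext hm3 hinv hfree hfj hfk hfi e34 e36 (Ne.symm e13) (Ne.symm e23)
        (Ne.symm e14) (Ne.symm e24) (Ne.symm e15) (Ne.symm e25) (Ne.symm e16) (Ne.symm e26)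
        hin (by rw [hinv]; exact hout) m3 m4 m5 m6 m1 m2
  by_cases hE3 : ∃ c, Crosses f k c ∧ c ≠ i ∧ c ≠ i + 1 ∧ c ≠ j ∧ c ≠ j + 1 ∧ c ≠ k ∧ c ≠ k + 1
  · obtain ⟨c, hcr, n1, n2, n3, n4, n5, n6⟩ := hE3
    obtain ⟨-, -, -, -, hxor⟩ := hcr
    rw [hfk] at hxor
    rcases hxor with ⟨hin, hout⟩ | ⟨hin, hout⟩
    · exact configZ_ext hm3 hinv hfree hfk hfi hfj e56 (Ne.symm e25) (Ne.symm e35)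
        (Ne.symm e45) (Ne.symm e36) (Ne.symm e46) e13 e14 e23 e24
        hin hout n5 n6 n1 n2 n3 n4
    · have m1 : f c ≠ i := fun h => n4 ((hswap _ _ h).symm.trans hfi)
      have m2 : f c ≠ i + 1 := fun h => n5 ((hswap _ _ h).symm.trans hfi1)
      have m3 : f c ≠ j := fun h => n6 ((hswap _ _ h).symm.trans hfj)
      have m4 : f c ≠ j + 1 := fun h => n1 ((hswap _ _ h).symm.trans hfj1)
      have m5 : f c ≠ k := fun h => n2 ((hswap _ _ h).symm.trans hfk)
      have m6 : f c ≠ k + 1 := fun h => n3 ((hswap _ _ h).symm.trans hfk1)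
      exact configZ_ext hm3 hinv hfree hfk hfi hfj e56 (Ne.symm e25) (Ne.symm e35)
        (Ne.symm e45) (Ne.symm e36) (Ne.symm e46) e13 e14 e23 e24
        hin (by rw [hinv]; exact hout) m5 m6 m1 m2 m3 m4
  by_cases hcr : ∃ c, Crosses f i c
  · obtain ⟨c, hc⟩ := hcr
    have hcor : c = i + 1 ∨ c = j ∨ c = k ∨ c = k + 1 := by
      by_contra hcon
      push_neg at hcon
      obtain ⟨g1, g2, g3, g4⟩ := hcon
      refine hE1 ⟨c, hc, hc.1, g1, g2, ?_, g3, g4⟩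
      have h2 := hc.2.1
      rwa [hfi] at h2
    obtain ⟨hc1, hc2, hc3, hc4, hxor⟩ := hc
    rw [hfi] at hxor
    have hvi1 : (i + 1 - i).val = 1 := succ_dval (by omega) i
    have hD0 : 0 < (j + 1 - i).val := dval_pos (Ne.symm e14)
    have hD1 : (j + 1 - i).val ≠ 1 := fun h => e24 (dval_eq_iff.2 (by rw [hvi1, h])).symm
    have hDlt : (j + 1 - i).val < 2 * m := ZMod.val_lt _
    have hK2lt : (k - i).val < 2 * m := ZMod.val_lt _
    have hK2top : (k - i).val ≠ 2 * m - 1 := fun h => (Ne.symm e16) (add_one_eq_of_dval_top h)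
    have hK1 : (k + 1 - i).val = (k - i).val + 1 := dval_add_one (by omega) (by omega)
    have hDj : (j - i).val = (j + 1 - i).val - 1 := by
      have h0 := dval_sub_one (M := 2 * m) (by omega) (a := i) (x := j + 1) (by omega)
      rwa [show j + 1 - 1 = j by ring] at h0
    have hK2ne0 : (k - i).val ≠ 0 := fun h => e15 (dval_eq_zero_iff.1 h).symm
    have hK2neD : (k - i).val ≠ (j + 1 - i).val := dval_ne_of_ne (Ne.symm e45)
    have hK1neD : (k + 1 - i).val ≠ (j + 1 - i).val := dval_ne_of_ne (Ne.symm e46)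
    have hjne0 : (j - i).val ≠ 0 := fun h => e13 (dval_eq_zero_iff.1 h).symm
    have harc1 : InArc i (j + 1) (i + 1) := ⟨by rw [hvi1]; omega, by rw [hvi1]; omega⟩
    have harcj : InArc i (j + 1) j := ⟨by omega, by omega⟩
    have horder : (j + 1 - i).val < (k - i).val := by
      rcases hcor with rfl | rfl | rfl | rfl
      · rw [hfi1] at hxor
        rcases hxor with ⟨-, hno⟩ | ⟨-, hno⟩
        · rw [inArc_iff] at hno
          omega
        · exact absurd harc1 hno
      · rw [hfj] at hxor
        rcases hxor with ⟨-, hno⟩ | ⟨-, hno⟩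
        · rw [inArc_iff] at hno
          omega
        · exact absurd harcj hno
      · rw [hfk] at hxor
        rcases hxor with ⟨-, hno⟩ | ⟨-, hno⟩
        · exact absurd harc1 hno
        · rw [inArc_iff] at hno
          omega
      · rw [hfk1] at hxor
        rcases hxor with ⟨-, hno⟩ | ⟨-, hno⟩
        · exact absurd harcj hno
        · rw [inArc_iff] at hno
          omega
    have hnoc : ∀ c', c' ≠ i → c' ≠ i + 1 → c' ≠ j → c' ≠ j + 1 → c' ≠ k → c' ≠ k + 1 →
        ¬ Crosses f j c' := fun c' h1 h2 h3 h4 h5 h6 hcr2 =>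
      hE2 ⟨c', hcr2, h1, h2, h3, h4, h5, h6⟩
    exact RL_step i (RL_of_reducible 3
      (configZ_typeC hm3 hinv hfree hfi hfj hfk e13 e14 e15 e16 e24 horder hnoc))
  · refine RL_of_reducible 4 ⟨i, fun c hc => hcr ⟨c, hc⟩⟩

lemma trigon_RL4 (hm : 1 ≤ m) {f : ZMod (2 * m) → ZMod (2 * m)}
    (hinv : Function.Involutive f) (hfree : ∀ x, f x ≠ x) {i j k : ZMod (2 * m)}
    (ht : Trigon f i j k) : ReductivityLe 4 f := by
  obtain ⟨hcard, hclosed, hfi1, hfj1, hfk1⟩ := ht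
  simp only [trigonSet] at hcard
  have hm3 : 3 ≤ m := three_le_of_card6 hm hcard
  obtain ⟨⟨e12, e13, e14, e15, e16⟩, ⟨e23, e24, e25, e26⟩, ⟨e34, e35, e36⟩, ⟨e45, e46⟩, e56⟩ :=
    of_card6 hcard
  haveI : NeZero (2 * m) := ⟨by omega⟩
  have hmem : ∀ x, f x = i ∨ f x = i + 1 ∨ f x = j ∨ f x = j + 1 ∨ f x = k ∨ f x = k + 1 → True := fun _ _ => trivial
  have hcl : ∀ x, x ∈ trigonSet i j k →
      (f x = i ∨ f x = i + 1 ∨ f x = j ∨ f x = j + 1 ∨ f x = k ∨ f x = k + 1) := by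
    intro x hx
    have h := hclosed x hx
    simpa only [trigonSet, Finset.mem_insert, Finset.mem_singleton] using h
  have memi : i ∈ trigonSet i j k := by simp [trigonSet]
  have memi1 : i + 1 ∈ trigonSet i j k := by simp [trigonSet]
  have memj : j ∈ trigonSet i j k := by simp [trigonSet]
  have memj1 : j + 1 ∈ trigonSet i j k := by simp [trigonSet]
  have memk : k ∈ trigonSet i j k := by simp [trigonSet]
  have memk1 : k + 1 ∈ trigonSet i j k := by simp [trigonSet]
  -- partner-transfer: f x = y → f y = x
  have hswap : ∀ x y : ZMod (2 * m), f x = y → f y = x := by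
    intro x y h
    rw [← h]
    exact hinv x
  rcases hcl i memi with hfi | hfi | hfi | hfi | hfi | hfi
  · exact absurd hfi (hfree i)
  · exact absurd hfi hfi1
  · -- f i = j
    have hfj' : f j = i := hswap _ _ hfi
    rcases hcl (i + 1) memi1 with hf2 | hf2 | hf2 | hf2 | hf2 | hf2
    · exact absurd (((hswap _ _ hf2).symm.trans hfi) : i + 1 = j) e23
    · exact absurd hf2 (hfree (i + 1))
    · exact absurd (((hswap _ _ hf2).symm.trans hfj') : i + 1 = i) (Ne.symm e12)
    · -- f (i+1) = j + 1 : impossible, k would be fixed with k+1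
      exfalso
      have hfj1' : f (j + 1) = i + 1 := hswap _ _ hf2
      rcases hcl k memk with hf3 | hf3 | hf3 | hf3 | hf3 | hf3
      · exact absurd (((hswap _ _ hf3).symm.trans hfi) : k = j) (Ne.symm e35)
      · exact absurd (((hswap _ _ hf3).symm.trans hf2) : k = j + 1) (Ne.symm e45)
      · exact absurd (((hswap _ _ hf3).symm.trans hfj') : k = i) (Ne.symm e15)
      · exact absurd (((hswap _ _ hf3).symm.trans hfj1') : k = i + 1) (Ne.symm e25)
      · exact absurd hf3 (hfree k)
      · exact absurd hf3 hfk1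
    · -- M1 : f i = j, f (i+1) = k
      have hfk' : f k = i + 1 := hswap _ _ hf2
      have hfj1' : f (j + 1) = k + 1 := by
        rcases hcl (j + 1) memj1 with hf3 | hf3 | hf3 | hf3 | hf3 | hf3
        · exact absurd (((hswap _ _ hf3).symm.trans hfi) : j + 1 = j) (Ne.symm e34)
        · exact absurd (((hswap _ _ hf3).symm.trans hf2) : j + 1 = k) e45
        · exact absurd (((hswap _ _ hf3).symm.trans hfj') : j + 1 = i) (Ne.symm e14)
        · exact absurd hf3 (hfree (j + 1))
        · exact absurd (((hswap _ _ hf3).symm.trans hfk') : j + 1 = i + 1) (Ne.symm e24)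
        · exact hf3
      exact RL_succ 3 (good_finish1 (by omega) hinv hfi (Ne.symm e13) hfk' (hswap _ _ hfj1')
        (Or.inl ⟨rfl, rfl⟩) (Ne.symm e15) (Ne.symm e16) (Ne.symm e35) (Ne.symm e36)
        (Ne.symm e25) (Ne.symm e26) (Ne.symm e45) (Ne.symm e46))
    · -- M2 : f i = j, f (i+1) = k + 1
      have hfk1' : f (k + 1) = i + 1 := hswap _ _ hf2
      have hfj1' : f (j + 1) = k := by
        rcases hcl (j + 1) memj1 with hf3 | hf3 | hf3 | hf3 | hf3 | hf3
        · exact absurd (((hswap _ _ hf3).symm.trans hfi) : j + 1 = j) (Ne.symm e34)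
        · exact absurd (((hswap _ _ hf3).symm.trans hf2) : j + 1 = k + 1) e46
        · exact absurd (((hswap _ _ hf3).symm.trans hfj') : j + 1 = i) (Ne.symm e14)
        · exact absurd hf3 (hfree (j + 1))
        · exact hf3
        · exact absurd (((hswap _ _ hf3).symm.trans hfk1') : j + 1 = i + 1) (Ne.symm e24)
      exact RL_succ 3 (good_finish1 (by omega) hinv hfi (Ne.symm e13) hfk1' (hswap _ _ hfj1')
        (Or.inr ⟨rfl, rfl⟩) (Ne.symm e15) (Ne.symm e16) (Ne.symm e35) (Ne.symm e36)
        (Ne.symm e25) (Ne.symm e26) (Ne.symm e45) (Ne.symm e46))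
  · -- f i = j + 1
    have hfj1' : f (j + 1) = i := hswap _ _ hfi
    rcases hcl (i + 1) memi1 with hf2 | hf2 | hf2 | hf2 | hf2 | hf2
    · exact absurd (((hswap _ _ hf2).symm.trans hfi) : i + 1 = j + 1) e24
    · exact absurd hf2 (hfree (i + 1))
    · -- f (i+1) = j : impossible (k fixed with k+1)
      exfalso
      have hfj' : f j = i + 1 := hswap _ _ hf2
      rcases hcl k memk with hf3 | hf3 | hf3 | hf3 | hf3 | hf3
      · exact absurd (((hswap _ _ hf3).symm.trans hfi) : k = j + 1) (Ne.symm e45)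
      · exact absurd (((hswap _ _ hf3).symm.trans hf2) : k = j) (Ne.symm e35)
      · exact absurd (((hswap _ _ hf3).symm.trans hfj') : k = i + 1) (Ne.symm e25)
      · exact absurd (((hswap _ _ hf3).symm.trans hfj1') : k = i) (Ne.symm e15)
      · exact absurd hf3 (hfree k)
      · exact absurd hf3 hfk1
    · exact absurd (((hswap _ _ hf2).symm.trans hfj1') : i + 1 = i) (Ne.symm e12)
    · -- M3 : config Z
      have hfk' : f k = i + 1 := hswap _ _ hf2
      have hfj' : f j = k + 1 := by
        rcases hcl j memj with hf3 | hf3 | hf3 | hf3 | hf3 | hf3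
        · exact absurd (((hswap _ _ hf3).symm.trans hfi) : j = j + 1) e34
        · exact absurd (((hswap _ _ hf3).symm.trans hf2) : j = k) e35
        · exact absurd hf3 (hfree j)
        · exact absurd hf3 hfj1
        · exact absurd (((hswap _ _ hf3).symm.trans hfk') : j = i + 1) (Ne.symm e23)
        · exact hf3
      exact configZ_RL4 hm3 hinv hfree hfi hfj' hfk'
        e12 e13 e14 e15 e16 e23 e24 e25 e26 e34 e35 e36 e45 e46 e56
    · -- M4 : f i = j + 1, f (i+1) = k + 1
      have hfk1' : f (k + 1) = i + 1 := hswap _ _ hf2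
      have hfj' : f j = k := by
        rcases hcl j memj with hf3 | hf3 | hf3 | hf3 | hf3 | hf3
        · exact absurd (((hswap _ _ hf3).symm.trans hfi) : j = j + 1) e34
        · exact absurd (((hswap _ _ hf3).symm.trans hf2) : j = k + 1) e36
        · exact absurd hf3 (hfree j)
        · exact absurd hf3 hfj1
        · exact hf3
        · exact absurd (((hswap _ _ hf3).symm.trans hfk1') : j = i + 1) (Ne.symm e23)
      refine RL_succ 3 (good_finish2 (by omega) hinv hf2 (Ne.symm e26) (x1 := j + 1) (x2 := j) (w := j)
        ?_ ?_ (Or.inr ⟨rfl, rfl⟩) (Ne.symm e23) (Ne.symm e24) e36 e46 ?_ ?_)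
      · rw [hfj1']; congr 1; ring
      · rw [hfj']; congr 1; ring
      · intro h
        rw [show i + 1 - 1 = i by ring] at h
        exact e14 h.symm
      · intro h
        rw [show k + 1 - 1 = k by ring] at h
        exact e45 h
  · -- f i = k
    have hfk' : f k = i := hswap _ _ hfi
    rcases hcl (i + 1) memi1 with hf2 | hf2 | hf2 | hf2 | hf2 | hf2
    · exact absurd (((hswap _ _ hf2).symm.trans hfi) : i + 1 = k) e25
    · exact absurd hf2 (hfree (i + 1))
    · -- M5 : f i = k, f (i+1) = j
      have hfj' : f j = i + 1 := hswap _ _ hf2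
      have hfj1' : f (j + 1) = k + 1 := by
        rcases hcl (j + 1) memj1 with hf3 | hf3 | hf3 | hf3 | hf3 | hf3
        · exact absurd (((hswap _ _ hf3).symm.trans hfi) : j + 1 = k) e45
        · exact absurd (((hswap _ _ hf3).symm.trans hf2) : j + 1 = j) (Ne.symm e34)
        · exact absurd (((hswap _ _ hf3).symm.trans hfj') : j + 1 = i + 1) (Ne.symm e24)
        · exact absurd hf3 (hfree (j + 1))
        · exact absurd (((hswap _ _ hf3).symm.trans hfk') : j + 1 = i) (Ne.symm e14)
        · exact hf3
      exact RL_succ 3 (good_finish1 (by omega) hinv hfi (Ne.symm e15) hfj' hfj1'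
        (Or.inl ⟨rfl, rfl⟩) (Ne.symm e13) (Ne.symm e14) e35 e45
        (Ne.symm e23) (Ne.symm e24) e36 e46)
    · -- M6 : f i = k, f (i+1) = j + 1
      have hfj1' : f (j + 1) = i + 1 := hswap _ _ hf2
      have hfj' : f j = k + 1 := by
        rcases hcl j memj with hf3 | hf3 | hf3 | hf3 | hf3 | hf3
        · exact absurd (((hswap _ _ hf3).symm.trans hfi) : j = k) e35
        · exact absurd (((hswap _ _ hf3).symm.trans hf2) : j = j + 1) e34
        · exact absurd hf3 (hfree j)
        · exact absurd hf3 hfj1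
        · exact absurd (((hswap _ _ hf3).symm.trans hfk') : j = i) (Ne.symm e13)
        · exact hf3
      exact RL_succ 3 (good_finish1 (by omega) hinv hfi (Ne.symm e15) hfj1' hfj'
        (Or.inr ⟨rfl, rfl⟩) (Ne.symm e13) (Ne.symm e14) e35 e45
        (Ne.symm e23) (Ne.symm e24) e36 e46)
    · -- f (i+1) = k : impossible (f i = k already)
      exact absurd (((hswap _ _ hf2).symm.trans hfk') : i + 1 = i) (Ne.symm e12)
    · -- f (i+1) = k + 1 : impossible (j fixed with j+1)
      exfalso
      have hfk1' : f (k + 1) = i + 1 := hswap _ _ hf2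
      rcases hcl j memj with hf3 | hf3 | hf3 | hf3 | hf3 | hf3
      · exact absurd (((hswap _ _ hf3).symm.trans hfi) : j = k) e35
      · exact absurd (((hswap _ _ hf3).symm.trans hf2) : j = k + 1) e36
      · exact absurd hf3 (hfree j)
      · exact absurd hf3 hfj1
      · exact absurd (((hswap _ _ hf3).symm.trans hfk') : j = i) (Ne.symm e13)
      · exact absurd (((hswap _ _ hf3).symm.trans hfk1') : j = i + 1) (Ne.symm e23)
  · -- f i = k + 1
    have hfk1' : f (k + 1) = i := hswap _ _ hfi
    rcases hcl (i + 1) memi1 with hf2 | hf2 | hf2 | hf2 | hf2 | hf2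
    · exact absurd (((hswap _ _ hf2).symm.trans hfi) : i + 1 = k + 1) e26
    · exact absurd hf2 (hfree (i + 1))
    · -- M7 : config Z with j and k swapped
      have hfj' : f j = i + 1 := hswap _ _ hf2
      have hfk' : f k = j + 1 := by
        rcases hcl k memk with hf3 | hf3 | hf3 | hf3 | hf3 | hf3
        · exact absurd (((hswap _ _ hf3).symm.trans hfi) : k = k + 1) e56
        · exact absurd (((hswap _ _ hf3).symm.trans hf2) : k = j) (Ne.symm e35)
        · exact absurd (((hswap _ _ hf3).symm.trans hfj') : k = i + 1) (Ne.symm e25)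
        · exact hf3
        · exact absurd hf3 (hfree k)
        · exact absurd hf3 hfk1
      exact configZ_RL4 hm3 hinv hfree hfi hfk' hfj'
        e12 e15 e16 e13 e14 e25 e26 e23 e24 e56 (Ne.symm e35) (Ne.symm e45)
        (Ne.symm e36) (Ne.symm e46) e34
    · -- M8 : f i = k + 1, f (i+1) = j + 1
      have hfj1' : f (j + 1) = i + 1 := hswap _ _ hf2
      have hfj' : f j = k := by
        rcases hcl j memj with hf3 | hf3 | hf3 | hf3 | hf3 | hf3
        · exact absurd (((hswap _ _ hf3).symm.trans hfi) : j = k + 1) e36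
        · exact absurd (((hswap _ _ hf3).symm.trans hf2) : j = j + 1) e34
        · exact absurd hf3 (hfree j)
        · exact absurd hf3 hfj1
        · exact hf3
        · exact absurd (((hswap _ _ hf3).symm.trans hfk1') : j = i) (Ne.symm e13)
      refine RL_succ 3 (good_finish2 (by omega) hinv hf2 (Ne.symm e24) (x1 := k + 1) (x2 := k) (w := k)
        ?_ ?_ (Or.inr ⟨rfl, rfl⟩) (Ne.symm e25) (Ne.symm e26) (Ne.symm e45) (Ne.symm e46) ?_ ?_)
      · rw [hfk1']; congr 1; ring
      · rw [hswap _ _ hfj']; congr 1; ring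
      · intro h
        rw [show i + 1 - 1 = i by ring] at h
        exact e16 h.symm
      · intro h
        rw [show j + 1 - 1 = j by ring] at h
        exact e36 h.symm
    · -- f (i+1) = k : impossible (j fixed with j+1)
      exfalso
      have hfk'' : f k = i + 1 := hswap _ _ hf2
      rcases hcl j memj with hf3 | hf3 | hf3 | hf3 | hf3 | hf3
      · exact absurd (((hswap _ _ hf3).symm.trans hfi) : j = k + 1) e36
      · exact absurd (((hswap _ _ hf3).symm.trans hf2) : j = k) e35
      · exact absurd hf3 (hfree j)
      · exact absurd hf3 hfj1
      · exact absurd (((hswap _ _ hf3).symm.trans hfk'') : j = i + 1) (Ne.symm e23)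
      · exact absurd (((hswap _ _ hf3).symm.trans hfk1') : j = i) (Ne.symm e13)
    · -- f (i+1) = k + 1 : impossible (f i = k + 1 already)
      exact absurd (((hswap _ _ hf2).symm.trans hfk1') : i + 1 = i) (Ne.symm e12)

end Trigon


/-- If a chord diagram contains a bigon (coherent or incoherent) or a trigon (of any of
the types A, B, C, D), then its reductivity is at most 4 (combinatorial form of
Theorem 1.1). -/
theorem bigon_or_trigon_reductivity_le_four {n : ℕ} (hn : 1 ≤ n)
    (f : ZMod (2 * n) → ZMod (2 * n)) (hinv : Function.Involutive f)
    (hfree : ∀ a, f a ≠ a)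
    (h : (∃ i j : ZMod (2 * n), IncoherentBigon f i j ∨ CoherentBigon f i j) ∨
         (∃ i j k : ZMod (2 * n),
            TrigonA f i j k ∨ TrigonB f i j k ∨ TrigonC f i j k ∨ TrigonD f i j k)) :
    ReductivityLe 4 f := by
  rcases h with ⟨i, j, hb | hb⟩ | ⟨i, j, k, ht⟩
  · obtain ⟨a, ha⟩ := incoh_step hn hb
    exact RL_step a (RL_of_reducible 3 ha)
  · exact RL_succ 3 (RL_succ 2 (bigon_RL2 hn hinv (Or.inr hb)))
  · have ht' : Trigon f i j k := by
      rcases ht with ⟨h1, -⟩ | ⟨h1, -⟩ | ⟨h1, -⟩ | ⟨h1, -⟩ <;> exact h1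
    exact trigon_RL4 hn hinv hfree ht'

end SphericalCurveReductivity
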